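/- arXiv:1512.03107 — 6 statements merged into one kernel-verified Lean document; each statement's English description precedes it below -/
import Mathlib

section
/- Let ε > 0 be such that L_ε ≠ ∅, and let ρ > 0 be such that ‖g + v‖₂ ≥ ρ for every w ∈ L_ε, every subgradient g of f at w, and every v ∈ N_Ω(w). Then for every w ∈ Ω one has ‖w − w†_ε‖₂ ≤ (1/ρ)·(f(w) − f(w†_ε)). -/
open RealInnerProductSpace

noncomputable section

/-- `g` is a subgradient of the convex function `f` at `w`. -/
def IsSubgradAt {d : ℕ} (f : EuclideanSpace ℝ (Fin d) → ℝ)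
    (w g : EuclideanSpace ℝ (Fin d)) : Prop :=
  ∀ u, f w + ⟪g, u - w⟫ ≤ f u

/-- `v` belongs to the normal cone of `Ω` at `w`. -/
def InNormalCone {d : ℕ} (Ω : Set (EuclideanSpace ℝ (Fin d)))
    (w v : EuclideanSpace ℝ (Fin d)) : Prop :=
  ∀ u ∈ Ω, ⟪v, u - w⟫ ≤ 0

lemma le_of_eps {a b : ℝ} (h : ∀ ε : ℝ, 0 < ε → a ≤ b + ε) : a ≤ b := by
  by_contra hc
  push_neg at hc
  have := h ((a - b) / 2) (by linarith)
  linarith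

/-- Convexity of the squared norm. -/
lemma normsq_combo {d : ℕ} (x y : EuclideanSpace ℝ (Fin d)) (t s : ℝ) (ht : 0 ≤ t) (hs : 0 ≤ s)
    (hts : t + s = 1) : ‖t • x + s • y‖ ^ 2 ≤ t * ‖x‖ ^ 2 + s * ‖y‖ ^ 2 := by
  have hs' : s = 1 - t := by linarith
  subst hs'
  have h1 : ‖t • x + (1 - t) • y‖ ^ 2
      = t^2*‖x‖^2 + 2*(t*(1-t)*⟪x,y⟫) + (1-t)^2*‖y‖^2 := by
    rw [norm_add_sq_real, norm_smul, norm_smul, real_inner_smul_left, real_inner_smul_right]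
    simp [abs_of_nonneg ht, abs_of_nonneg hs]; ring
  have h2 : ‖x - y‖ ^ 2 = ‖x‖^2 - 2*⟪x,y⟫ + ‖y‖^2 := by
    rw [norm_sub_sq_real]
  have h3 : 0 ≤ t * (1 - t) * ‖x - y‖ ^ 2 :=
    mul_nonneg (mul_nonneg ht hs) (sq_nonneg _)
  nlinarith [h1, h2, h3]

lemma combo_sub {d : ℕ} (x y z : EuclideanSpace ℝ (Fin d)) (t s : ℝ) (hts : t + s = 1) :
    t • x + s • y - z = t • (x - z) + s • (y - z) := by
  calc t • x + s • y - z = t • x + s • y - (t + s) • z := by rw [hts, one_smul]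
  _ = t • (x - z) + s • (y - z) := by rw [add_smul, smul_sub, smul_sub]; abel

/-- Moreau–Rockafellar type decomposition of a "constrained" subgradient. -/
lemma moreau_decomp {d : ℕ} (f : EuclideanSpace ℝ (Fin d) → ℝ)
    (hf : ConvexOn ℝ Set.univ f)
    (Ω : Set (EuclideanSpace ℝ (Fin d))) (hΩcvx : Convex ℝ Ω) (hΩne : Ω.Nonempty)
    (x₀ : EuclideanSpace ℝ (Fin d)) (hx₀ : x₀ ∈ Ω) (p : EuclideanSpace ℝ (Fin d))
    (hp : ∀ u ∈ Ω, f x₀ + ⟪p, u - x₀⟫ ≤ f u) :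
    ∃ g v, IsSubgradAt f x₀ g ∧ InNormalCone Ω x₀ v ∧ g + v = p := by
  classical
  set F : EuclideanSpace ℝ (Fin d) → ℝ := fun u => f u - f x₀ - ⟪p, u - x₀⟫ with hFdef
  have hF0 : F x₀ = 0 := by simp [hFdef]
  have hFΩ : ∀ u ∈ Ω, 0 ≤ F u := by
    intro u hu; have := hp u hu; simp only [hFdef]; linarith
  have hFcvx : ConvexOn ℝ Set.univ F := by
    refine ⟨convex_univ, fun x _ y _ a b ha hb hab => ?_⟩
    have hfc := hf.2 (Set.mem_univ x) (Set.mem_univ y) ha hb hab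
    have hkey : a • x + b • y - x₀ = a • (x - x₀) + b • (y - x₀) := combo_sub x y x₀ a b hab
    simp only [hFdef, smul_eq_mul] at hfc ⊢
    rw [hkey, inner_add_right, real_inner_smul_right, real_inner_smul_right]
    have hx0 : a * f x₀ + b * f x₀ = f x₀ := by rw [← add_mul, hab, one_mul]
    linarith
  have hFcont : Continuous F := by
    have h1 : Continuous f := hf.locallyLipschitz.continuous
    have h2 : Continuous fun u : EuclideanSpace ℝ (Fin d) => ⟪p, u - x₀⟫ :=
      Continuous.inner continuous_const ((continuous_id.sub continuous_const))
    exact (h1.sub continuous_const).sub h2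
  set S : Set (EuclideanSpace ℝ (Fin d) × ℝ) := {q | F q.1 < q.2} with hSdef
  have hSopen : IsOpen S := isOpen_lt (hFcont.comp continuous_fst) continuous_snd
  have hScvx : Convex ℝ S := by
    have h := hFcvx.convex_strict_epigraph
    have heq : {q : EuclideanSpace ℝ (Fin d) × ℝ | q.1 ∈ Set.univ ∧ F q.1 < q.2} = S := by
      ext q; simp [hSdef]
    rwa [heq] at h
  have hTcvx : Convex ℝ (Ω ×ˢ Set.Iio (0:ℝ)) := hΩcvx.prod (convex_Iio 0)
  have hdisj : Disjoint S (Ω ×ˢ Set.Iio (0:ℝ)) := by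
    rw [Set.disjoint_left]
    rintro ⟨u, t⟩ hS ⟨huΩ, ht⟩
    have h1 : 0 ≤ F u := hFΩ u huΩ
    have h2 : F u < t := hS
    have h3 : t < 0 := ht
    linarith
  obtain ⟨φ, c, hSlt, hTge⟩ := geometric_hahn_banach_open hScvx hSopen hTcvx hdisj
  set β : ℝ := φ (0, 1) with hβdef
  set ℓ : EuclideanSpace ℝ (Fin d) → ℝ := fun u => φ (u, 0) with hℓdef
  have hφ : ∀ (u : EuclideanSpace ℝ (Fin d)) (t : ℝ), φ (u, t) = ℓ u + t * β := by
    intro u t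
    have h : ((u, t) : EuclideanSpace ℝ (Fin d) × ℝ)
        = (u, 0) + t • ((0 : EuclideanSpace ℝ (Fin d)), (1:ℝ)) := by
      simp [Prod.ext_iff]
    rw [h, map_add, map_smul, smul_eq_mul]
  have hℓsmul : ∀ (u : EuclideanSpace ℝ (Fin d)) (t : ℝ), ℓ (t • u) = t * ℓ u := by
    intro u t
    have h : ((t • u, (0:ℝ)) : EuclideanSpace ℝ (Fin d) × ℝ) = t • (u, 0) := by simp
    simp only [hℓdef]
    rw [h, map_smul, smul_eq_mul]
  have hβle : β ≤ 0 := by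
    by_contra hb
    push_neg at hb
    set t : ℝ := max 1 ((c - ℓ x₀) / β + 1) with htdef
    have ht1 : (1:ℝ) ≤ t := le_max_left _ _
    have ht2 : (c - ℓ x₀) / β + 1 ≤ t := le_max_right _ _
    have hmem : ((x₀, t) : EuclideanSpace ℝ (Fin d) × ℝ) ∈ S := by
      simp only [hSdef, Set.mem_setOf_eq, hF0]; linarith
    have h := hSlt _ hmem
    rw [hφ] at h
    have h3 : (c - ℓ x₀) / β * β = c - ℓ x₀ := by field_simp
    nlinarith [mul_le_mul_of_nonneg_right ht2 hb.le]
  have hub : ∀ u, ℓ u + F u * β ≤ c := by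
    intro u
    rcases eq_or_lt_of_le hβle with hb0 | hbneg
    · have hmem : ((u, F u + 1) : EuclideanSpace ℝ (Fin d) × ℝ) ∈ S := by
        simp only [hSdef, Set.mem_setOf_eq]; linarith
      have h := hSlt _ hmem
      rw [hφ, hb0] at h
      rw [hb0]
      simp only [mul_zero, add_zero] at h ⊢
      linarith
    · have hβne : β ≠ 0 := ne_of_lt hbneg
      have hnb : (0:ℝ) < -β := neg_pos.mpr hbneg
      refine le_of_eps ?_
      intro ε hε
      have hδpos : 0 < ε / -β := div_pos hε hnb
      have hmem : ((u, F u + ε / -β) : EuclideanSpace ℝ (Fin d) × ℝ) ∈ S := by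
        simp only [hSdef, Set.mem_setOf_eq]; linarith
      have h := hSlt _ hmem
      rw [hφ, add_mul] at h
      have hc : ε / -β * β = -ε := by
        field_simp
      rw [hc] at h
      linarith
  have hβneg : β < 0 := by
    rcases eq_or_lt_of_le hβle with hb0 | h
    · exfalso
      have hl0 : ∀ u, ℓ u ≤ 0 := by
        intro u
        by_contra hgt
        push_neg at hgt
        have htpos : 0 < (|c| + 1) / ℓ u := by positivity
        have h := hub (((|c| + 1) / ℓ u) • u)
        rw [hℓsmul, hb0] at h
        have h2 : (|c| + 1) / ℓ u * ℓ u = |c| + 1 := by field_simp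
        have h3 : c ≤ |c| := le_abs_self c
        simp only [mul_zero, add_zero] at h
        linarith
      have hl0' : ∀ u, ℓ u = 0 := by
        intro u
        have h1 := hl0 u
        have h2 := hl0 (-u)
        have h3 : ℓ (-u) = -ℓ u := by
          have := hℓsmul u (-1); simpa using this
        rw [h3] at h2
        linarith
      obtain ⟨z, hz⟩ := hΩne
      have hc1 : (0:ℝ) < c := by
        have hmem : ((x₀, 1) : EuclideanSpace ℝ (Fin d) × ℝ) ∈ S := by
          simp only [hSdef, Set.mem_setOf_eq, hF0]; norm_num
        have h := hSlt _ hmem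
        rw [hφ, hl0', hb0] at h
        linarith
      have hc2 : c ≤ 0 := by
        have hmem : ((z, -1) : EuclideanSpace ℝ (Fin d) × ℝ) ∈ Ω ×ˢ Set.Iio (0:ℝ) := by
          exact ⟨hz, by norm_num⟩
        have h := hTge _ hmem
        rw [hφ, hl0', hb0] at h
        linarith
      linarith
    · exact h
  have hβne : β ≠ 0 := ne_of_lt hβneg
  have hnb : (0:ℝ) < -β := neg_pos.mpr hβneg
  set a : EuclideanSpace ℝ (Fin d) := (InnerProductSpace.toDual ℝ _).symm
      (φ.comp (ContinuousLinearMap.inl ℝ (EuclideanSpace ℝ (Fin d)) ℝ)) with hadef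
  have ha : ∀ u, ⟪a, u⟫ = ℓ u := by
    intro u
    rw [hadef, InnerProductSpace.toDual_symm_apply]
    rfl
  have hcle : ∀ z ∈ Ω, c ≤ ℓ z := by
    intro z hz
    refine le_of_eps ?_
    intro ε hε
    have hδpos : 0 < ε / -β := div_pos hε hnb
    have hmem : ((z, -(ε / -β)) : EuclideanSpace ℝ (Fin d) × ℝ) ∈ Ω ×ˢ Set.Iio (0:ℝ) := by
      exact ⟨hz, by simpa using hδpos⟩
    have h := hTge _ hmem
    rw [hφ] at h
    have hc : -(ε / -β) * β = ε := by
      field_simp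
    linarith
  have hx₀c : ℓ x₀ ≤ c := by have := hub x₀; rw [hF0] at this; linarith
  have hceq : c = ℓ x₀ := le_antisymm (hcle x₀ hx₀) hx₀c
  refine ⟨p - β⁻¹ • a, β⁻¹ • a, ?_, ?_, by simp⟩
  · intro u
    have h := hub u
    rw [hceq] at h
    have hinner : ⟪a, u - x₀⟫ = ℓ u - ℓ x₀ := by
      rw [inner_sub_right, ha, ha]
    have hsub : ⟪p - β⁻¹ • a, u - x₀⟫ = ⟪p, u - x₀⟫ - β⁻¹ * ⟪a, u - x₀⟫ := by
      rw [inner_sub_left, real_inner_smul_left]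
    rw [hsub, hinner]
    have h4 : (-β) * (F u + β⁻¹ * (ℓ u - ℓ x₀)) = -(ℓ u + F u * β - ℓ x₀) := by
      field_simp; ring
    have h5 : 0 ≤ (-β) * (F u + β⁻¹ * (ℓ u - ℓ x₀)) := by rw [h4]; linarith
    have hkey : 0 ≤ F u + β⁻¹ * (ℓ u - ℓ x₀) :=
      nonneg_of_mul_nonneg_right h5 hnb
    simp only [hFdef] at hkey
    linarith
  · intro u hu
    rw [real_inner_smul_left, inner_sub_right, ha, ha]
    have h1 : c ≤ ℓ u := hcle u hu
    have h2 : 0 ≤ ℓ u - ℓ x₀ := by rw [← hceq] at *; linarith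
    have h3 : β⁻¹ ≤ 0 := inv_nonpos.mpr hβle
    exact mul_nonpos_iff.mpr (Or.inr ⟨h3, h2⟩)
set_option maxHeartbeats 2000000 in
/-- if the first-order optimality residual is bounded below by `ρ` on the
`ε`-level set, then for every `w ∈ Ω`, `‖w - w†_ε‖₂ ≤ (1/ρ)·(f w - f w†_ε)`, where `w†_ε`
is the point of the `ε`-sublevel set closest to `w`. -/
theorem stmt_0 {d : ℕ} (f : EuclideanSpace ℝ (Fin d) → ℝ)
    (Ω : Set (EuclideanSpace ℝ (Fin d)))
    (hΩne : Ω.Nonempty) (hΩcl : IsClosed Ω) (hΩcvx : Convex ℝ Ω)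
    (hf : ConvexOn ℝ Set.univ f)
    (fstar : ℝ) (hmin : ∀ z ∈ Ω, fstar ≤ f z)
    (hOs_ne : {z ∈ Ω | f z = fstar}.Nonempty)
    (hOs_cvx : Convex ℝ {z ∈ Ω | f z = fstar})
    (hOs_cpt : IsCompact {z ∈ Ω | f z = fstar})
    (ε : ℝ) (hε : 0 < ε)
    (hLne : {z ∈ Ω | f z = fstar + ε}.Nonempty)
    (ρ : ℝ) (hρ : 0 < ρ)
    (hres : ∀ z ∈ {z ∈ Ω | f z = fstar + ε}, ∀ g v : EuclideanSpace ℝ (Fin d),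
      IsSubgradAt f z g → InNormalCone Ω z v → ρ ≤ ‖g + v‖)
    (w : EuclideanSpace ℝ (Fin d)) (hw : w ∈ Ω)
    (wd : EuclideanSpace ℝ (Fin d))
    (hwd : wd ∈ {z ∈ Ω | f z ≤ fstar + ε})
    (hwd_min : ∀ z ∈ {z ∈ Ω | f z ≤ fstar + ε}, ‖wd - w‖ ≤ ‖z - w‖) :
    ‖w - wd‖ ≤ (1 / ρ) * (f w - f wd) := by
  obtain ⟨hwdΩ, hwdle⟩ := hwd
  rcases le_or_gt (f w) (fstar + ε) with hfw | hfw
  · -- `w` is itself in the sublevel set, hence `wd = w`.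
    have h0 := hwd_min w ⟨hw, hfw⟩
    simp only [sub_self, norm_zero] at h0
    have h1 : wd - w = 0 := norm_le_zero_iff.mp h0
    have hwdw : wd = w := by rwa [sub_eq_zero] at h1
    rw [hwdw]
    simp
  · -- Step 1 : f wd = fstar + ε.
    have hfwd : f wd = fstar + ε := by
      by_contra hne
      have hlt : f wd < fstar + ε := lt_of_le_of_ne hwdle hne
      have hD : 0 < f w - f wd := by linarith
      set t : ℝ := (fstar + ε - f wd) / (f w - f wd) with htdef
      have ht0 : 0 < t := div_pos (by linarith) hD
      have ht1 : t ≤ 1 := by rw [div_le_one hD]; linarith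
      set z := t • w + (1 - t) • wd with hzdef
      have hzΩ : z ∈ Ω := hΩcvx hw hwdΩ ht0.le (by linarith) (by ring)
      have hfz : f z ≤ fstar + ε := by
        have h := hf.2 (Set.mem_univ w) (Set.mem_univ wd) ht0.le
          (by linarith : (0:ℝ) ≤ 1 - t) (by ring)
        have htt : t * (f w - f wd) = fstar + ε - f wd := by
          rw [htdef]; field_simp
        simp only [smul_eq_mul] at h
        nlinarith [h, htt]
      have hwdw_ne : wd - w ≠ 0 := by
        intro hcontra
        have h2 : wd = w := by rwa [sub_eq_zero] at hcontra
        rw [h2] at hlt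
        linarith
      have hnorm_pos : 0 < ‖wd - w‖ := norm_pos_iff.mpr hwdw_ne
      have hzw_eq : z - w = (1 - t) • (wd - w) := by
        rw [hzdef, combo_sub w wd w t (1-t) (by ring), sub_self, smul_zero, zero_add]
      have hzw : ‖z - w‖ < ‖wd - w‖ := by
        rw [hzw_eq, norm_smul]
        have habs : |1 - t| = 1 - t := abs_of_nonneg (by linarith)
        rw [Real.norm_eq_abs, habs]
        nlinarith [mul_pos ht0 hnorm_pos]
      have := hwd_min z ⟨hzΩ, hfz⟩
      linarith
    -- Step 2 : KKT multiplier via separation in ℝ².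
    set K : Set (ℝ × ℝ) :=
      {q | ∃ z ∈ Ω, ‖z - w‖^2/2 - ‖wd - w‖^2/2 ≤ q.1 ∧ f z - (fstar + ε) ≤ q.2} with hKdef
    have hKcvx : Convex ℝ K := by
      rintro q1 ⟨z1, hz1, hq11, hq12⟩ q2 ⟨z2, hz2, hq21, hq22⟩ a b ha hb hab
      refine ⟨a • z1 + b • z2, hΩcvx hz1 hz2 ha hb hab, ?_, ?_⟩
      · have hcombo : a • z1 + b • z2 - w = a • (z1 - w) + b • (z2 - w) :=
          combo_sub _ _ _ _ _ hab
        have hn := normsq_combo (z1 - w) (z2 - w) a b ha hb hab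
        rw [← hcombo] at hn
        have hfst : (a • q1 + b • q2).1 = a * q1.1 + b * q2.1 := rfl
        rw [hfst]
        have e1 := mul_le_mul_of_nonneg_left hq11 ha
        have e2 := mul_le_mul_of_nonneg_left hq21 hb
        have eW : a * (‖wd - w‖^2/2) + b * (‖wd - w‖^2/2) = ‖wd - w‖^2/2 := by
          rw [← add_mul, hab, one_mul]
        linarith
      · have h := hf.2 (Set.mem_univ z1) (Set.mem_univ z2) ha hb hab
        simp only [smul_eq_mul] at h
        have hsnd : (a • q1 + b • q2).2 = a * q1.2 + b * q2.2 := rfl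
        rw [hsnd]
        have e1 := mul_le_mul_of_nonneg_left hq12 ha
        have e2 := mul_le_mul_of_nonneg_left hq22 hb
        have eC : a * (fstar + ε) + b * (fstar + ε) = fstar + ε := by
          rw [← add_mul, hab, one_mul]
        linarith
    have hOopen : IsOpen (Set.Iio (0:ℝ) ×ˢ Set.Iio (0:ℝ)) := isOpen_Iio.prod isOpen_Iio
    have hOcvx : Convex ℝ (Set.Iio (0:ℝ) ×ˢ Set.Iio (0:ℝ)) :=
      (convex_Iio _).prod (convex_Iio _)
    have hdisj : Disjoint (Set.Iio (0:ℝ) ×ˢ Set.Iio (0:ℝ)) K := by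
      rw [Set.disjoint_left]
      rintro ⟨r, s⟩ ⟨hr, hs⟩ ⟨z, hz, hzr, hzs⟩
      simp only [Set.mem_Iio] at hr hs
      have hfz : f z ≤ fstar + ε := by
        simp only at hzs; linarith
      have hle := hwd_min z ⟨hz, hfz⟩
      have hsq : ‖wd - w‖^2 ≤ ‖z - w‖^2 := by
        have := pow_le_pow_left₀ (norm_nonneg _) hle 2
        exact this
      simp only at hzr
      linarith
    obtain ⟨φ, c, hOlt, hKge⟩ := geometric_hahn_banach_open hOcvx hOopen hKcvx hdisj
    set α : ℝ := φ (1, 0) with hαdef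
    set β : ℝ := φ (0, 1) with hβdef
    have hφ : ∀ r s : ℝ, φ (r, s) = r * α + s * β := by
      intro r s
      have h : ((r, s) : ℝ × ℝ) = r • ((1:ℝ), (0:ℝ)) + s • ((0:ℝ), (1:ℝ)) := by
        simp [Prod.ext_iff]
      rw [h, map_add, map_smul, map_smul, smul_eq_mul, smul_eq_mul]
    have hα : 0 ≤ α := by
      by_contra hcon
      push_neg at hcon
      have hnα : 0 < -α := by linarith
      set t : ℝ := max 1 ((c + β + 1)/(-α)) with htdef
      have ht1 : (1:ℝ) ≤ t := le_max_left _ _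
      have ht2 : (c + β + 1)/(-α) ≤ t := le_max_right _ _
      have hmem : ((-t, -1) : ℝ × ℝ) ∈ Set.Iio (0:ℝ) ×ˢ Set.Iio (0:ℝ) :=
        ⟨by simp only [Set.mem_Iio]; linarith, by simp only [Set.mem_Iio]; norm_num⟩
      have h := hOlt _ hmem
      rw [hφ] at h
      have h3 : (c + β + 1)/(-α) * (-α) = c + β + 1 := div_mul_cancel₀ _ (ne_of_gt hnα)
      have h4 := mul_le_mul_of_nonneg_right ht2 hnα.le
      rw [h3] at h4
      nlinarith
    have hβ : 0 ≤ β := by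
      by_contra hcon
      push_neg at hcon
      have hnβ : 0 < -β := by linarith
      set t : ℝ := max 1 ((c + α + 1)/(-β)) with htdef
      have ht1 : (1:ℝ) ≤ t := le_max_left _ _
      have ht2 : (c + α + 1)/(-β) ≤ t := le_max_right _ _
      have hmem : ((-1, -t) : ℝ × ℝ) ∈ Set.Iio (0:ℝ) ×ˢ Set.Iio (0:ℝ) :=
        ⟨by simp only [Set.mem_Iio]; norm_num, by simp only [Set.mem_Iio]; linarith⟩
      have h := hOlt _ hmem
      rw [hφ] at h
      have h3 : (c + α + 1)/(-β) * (-β) = c + α + 1 := div_mul_cancel₀ _ (ne_of_gt hnβ)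
      have h4 := mul_le_mul_of_nonneg_right ht2 hnβ.le
      rw [h3] at h4
      nlinarith
    have hc0 : c ≤ 0 := by
      have hmem : ((0, 0) : ℝ × ℝ) ∈ K := by
        refine ⟨wd, hwdΩ, by simp, ?_⟩
        simp only [hfwd]; simp
      have h := hKge _ hmem
      rw [hφ] at h
      linarith
    have hcge : 0 ≤ c := by
      by_contra hcon
      push_neg at hcon
      have hαβ : 0 ≤ α + β := by linarith
      set δ : ℝ := -c / (2*(α+β)+1) with hδdef
      have hδpos : 0 < δ := div_pos (by linarith) (by linarith)
      have hmem : ((-δ, -δ) : ℝ × ℝ) ∈ Set.Iio (0:ℝ) ×ˢ Set.Iio (0:ℝ) :=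
        ⟨by simp only [Set.mem_Iio]; linarith, by simp only [Set.mem_Iio]; linarith⟩
      have h := hOlt _ hmem
      rw [hφ] at h
      have hd : δ * (2*(α+β)+1) = -c := div_mul_cancel₀ _ (by linarith : (2*(α+β)+1) ≠ 0)
      have h5 : 0 ≤ δ * (α + β) := mul_nonneg hδpos.le hαβ
      nlinarith
    have hceq0 : c = 0 := le_antisymm hc0 hcge
    have hKey : ∀ z ∈ Ω,
        0 ≤ α * (‖z - w‖^2/2 - ‖wd - w‖^2/2) + β * (f z - (fstar + ε)) := by
      intro z hz
      have hmem : ((‖z - w‖^2/2 - ‖wd - w‖^2/2, f z - (fstar + ε)) : ℝ × ℝ) ∈ K :=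
        ⟨z, hz, le_refl _, le_refl _⟩
      have h := hKge _ hmem
      rw [hφ, hceq0] at h
      linarith [h]
    have hα0 : 0 < α := by
      rcases eq_or_lt_of_le hα with he | h
      · exfalso
        obtain ⟨ws, hwsΩ, hws⟩ := hOs_ne
        have h1 := hKey ws hwsΩ
        rw [← he, hws] at h1
        have hβ0 : β = 0 := by nlinarith
        have hmem : ((-1, -1) : ℝ × ℝ) ∈ Set.Iio (0:ℝ) ×ˢ Set.Iio (0:ℝ) :=
          ⟨by simp only [Set.mem_Iio]; norm_num, by simp only [Set.mem_Iio]; norm_num⟩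
        have h2 := hOlt _ hmem
        rw [hφ, ← he, hβ0, hceq0] at h2
        norm_num at h2
      · exact h
    set lam : ℝ := β / α with hlamdef
    have hlam_nonneg : 0 ≤ lam := div_nonneg hβ hα0.le
    have hβlam : β = lam * α := by
      rw [hlamdef, div_mul_cancel₀ _ (ne_of_gt hα0)]
    have hmin2 : ∀ z ∈ Ω, ‖wd - w‖^2/2 + lam * f wd ≤ ‖z - w‖^2/2 + lam * f z := by
      intro z hz
      have h := hKey z hz
      have h2 : 0 ≤ α * ((‖z - w‖^2/2 - ‖wd - w‖^2/2) + lam * (f z - (fstar + ε))) := by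
        have heq : α * ((‖z - w‖^2/2 - ‖wd - w‖^2/2) + lam * (f z - (fstar + ε)))
            = α * (‖z - w‖^2/2 - ‖wd - w‖^2/2) + β * (f z - (fstar + ε)) := by
          rw [hβlam]; ring
        rw [heq]; exact h
      have h3 := nonneg_of_mul_nonneg_right h2 hα0
      rw [hfwd]
      linarith
    have hlam_pos : 0 < lam := by
      rcases eq_or_lt_of_le hlam_nonneg with he | h
      · exfalso
        have h1 := hmin2 w hw
        rw [← he] at h1
        simp only [sub_self, norm_zero, zero_mul, zero_add, add_zero] at h1
        have h2 : ‖wd - w‖^2 ≤ 0 := by nlinarith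
        have h3 : ‖wd - w‖ = 0 :=
          le_antisymm (by nlinarith [norm_nonneg (wd - w)]) (norm_nonneg _)
        have h4 : wd = w := by rwa [norm_eq_zero, sub_eq_zero] at h3
        rw [h4] at hfwd
        linarith
      · exact h
    -- Step 3 : variational inequality.
    have hVI : ∀ u ∈ Ω, 0 ≤ ⟪wd - w, u - wd⟫ + lam * (f u - f wd) := by
      intro u hu
      by_contra hA
      push_neg at hA
      set A : ℝ := ⟪wd - w, u - wd⟫ + lam * (f u - f wd) with hAdef
      set B : ℝ := ‖u - wd‖^2/2 with hBdef
      have hB : 0 ≤ B := by positivity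
      set t : ℝ := min 1 (-A/(2*B+1)) with htdef
      have ht0 : 0 < t := lt_min one_pos (div_pos (by linarith) (by linarith))
      have ht1 : t ≤ 1 := min_le_left _ _
      have htB : t ≤ -A/(2*B+1) := min_le_right _ _
      have hcombo : wd + t • (u - wd) = (1-t) • wd + t • u := by
        rw [smul_sub, sub_smul, one_smul]; abel
      have hzΩ : wd + t • (u - wd) ∈ Ω := by
        rw [hcombo]; exact hΩcvx hwdΩ hu (by linarith) ht0.le (by ring)
      have hnormid : ‖(wd + t • (u - wd)) - w‖^2
          = ‖wd - w‖^2 + 2*(t*⟪wd - w, u - wd⟫) + t^2*‖u - wd‖^2 := by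
        have hrw : (wd + t • (u - wd)) - w = (wd - w) + t • (u - wd) := by abel
        rw [hrw, norm_add_sq_real, real_inner_smul_right, norm_smul]
        simp only [Real.norm_eq_abs, abs_of_nonneg ht0.le]
        ring
      have hfz : f (wd + t • (u - wd)) ≤ (1-t) * f wd + t * f u := by
        rw [hcombo]
        have h := hf.2 (Set.mem_univ wd) (Set.mem_univ u) (by linarith : (0:ℝ) ≤ 1 - t)
          ht0.le (by ring)
        simpa using h
      have hmm := hmin2 _ hzΩ
      have hlf : lam * f (wd + t • (u - wd)) ≤ lam * ((1-t) * f wd + t * f u) :=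
        mul_le_mul_of_nonneg_left hfz hlam_nonneg
      have h6 : 0 ≤ t * (A + t * B) := by nlinarith [hmm, hnormid, hlf]
      have h7 : 0 ≤ A + t * B := nonneg_of_mul_nonneg_right h6 ht0
      have h9 : (0:ℝ) < 2*B+1 := by linarith
      have hq : t * (2*B+1) ≤ -A := by
        calc t * (2*B+1) ≤ (-A/(2*B+1)) * (2*B+1) :=
              mul_le_mul_of_nonneg_right htB h9.le
        _ = -A := div_mul_cancel₀ _ (ne_of_gt h9)
      nlinarith [h7, hq, mul_nonneg ht0.le hB, ht0]
    -- Step 4 : apply the decomposition and conclude.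
    have hlaminv : 0 ≤ lam⁻¹ := inv_nonneg.mpr hlam_nonneg
    have hp : ∀ u ∈ Ω, f wd + ⟪lam⁻¹ • (w - wd), u - wd⟫ ≤ f u := by
      intro u hu
      have h := hVI u hu
      have hneg : ⟪w - wd, u - wd⟫ = -⟪wd - w, u - wd⟫ := by
        rw [show w - wd = -(wd - w) by abel, inner_neg_left]
      have h2 : -⟪wd - w, u - wd⟫ ≤ lam * (f u - f wd) := by linarith
      have h3 : lam⁻¹ * (-⟪wd - w, u - wd⟫) ≤ lam⁻¹ * (lam * (f u - f wd)) :=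
        mul_le_mul_of_nonneg_left h2 hlaminv
      have h4 : lam⁻¹ * (lam * (f u - f wd)) = f u - f wd := by
        field_simp
      rw [real_inner_smul_left, hneg]
      linarith
    obtain ⟨g, v, hg, hv, hgv⟩ := moreau_decomp f hf Ω hΩcvx hΩne wd hwdΩ
      (lam⁻¹ • (w - wd)) hp
    have hρ2 := hres wd ⟨hwdΩ, hfwd⟩ g v hg hv
    rw [hgv] at hρ2
    have hnp : ‖lam⁻¹ • (w - wd)‖ = lam⁻¹ * ‖w - wd‖ := by
      rw [norm_smul, Real.norm_eq_abs, abs_of_nonneg hlaminv]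
    rw [hnp] at hρ2
    have hNpos : 0 < ‖w - wd‖ := by
      rw [norm_pos_iff, sub_ne_zero]
      intro he
      rw [he] at hfw
      linarith [hfw, hfwd]
    have hfinal1 : lam⁻¹ * ‖w - wd‖^2 ≤ f w - f wd := by
      have h := hp w hw
      rw [real_inner_smul_left, real_inner_self_eq_norm_sq] at h
      linarith
    have h10 : ρ * ‖w - wd‖ ≤ lam⁻¹ * ‖w - wd‖^2 := by
      nlinarith [mul_le_mul_of_nonneg_right hρ2 (norm_nonneg (w - wd))]
    have h11 : ρ * ‖w - wd‖ ≤ f w - f wd := le_trans h10 hfinal1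
    calc ‖w - wd‖ = (1/ρ) * (ρ * ‖w - wd‖) := by field_simp
    _ ≤ (1/ρ) * (f w - f wd) := mul_le_mul_of_nonneg_left h11 (by positivity)
end
end

section
/- Let ε > 0 with L_ε ≠ ∅ and let ρ > 0 satisfy ‖g + v‖₂ ≥ ρ for every w ∈ L_ε, every subgradient g of f at w, and every v ∈ N_Ω(w). Let w₀ ∈ Ω, let ε₀ > 0 satisfy f(w₀) − f_* ≤ ε₀ and ε ≤ ε₀, let α > 1, and let the integer t satisfy t ≥ α²G²/ρ². Then the RSG iterates satisfy f(w_k) − f_* ≤ ε₀/α^k + ε for every k ≥ 0; in particular, for K = ⌈log_α(ε₀/ε)⌉, f(w_K) − f_* ≤ 2ε. -/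
open RealInnerProductSpace

noncomputable section

/-- `w` is a sequence of stage outputs of the RSG method with parameters
`(w 0, α, ε₀, t)`: within stage `k`, starting from `u k 1 = w (k-1)`, `t` projected
subgradient steps with constant step size `η_k = ε₀/(α^k G²)` are performed and `w k`
is the average of the `t` iterates of stage `k`. -/
def IsRSGSeq {d : ℕ} (f : EuclideanSpace ℝ (Fin d) → ℝ)
    (Ω : Set (EuclideanSpace ℝ (Fin d))) (G ε₀ α : ℝ) (t : ℕ)
    (w : ℕ → EuclideanSpace ℝ (Fin d)) : Prop :=
  ∃ u g : ℕ → ℕ → EuclideanSpace ℝ (Fin d),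
    (∀ k, 1 ≤ k → u k 1 = w (k - 1)) ∧
    (∀ k, 1 ≤ k → ∀ i, 1 ≤ i → i ≤ t →
      IsSubgradAt f (u k i) (g k i) ∧
      u k (i + 1) ∈ Ω ∧
      ∀ z ∈ Ω, ‖u k (i + 1) - (u k i - (ε₀ / (α ^ k * G ^ 2)) • g k i)‖
        ≤ ‖z - (u k i - (ε₀ / (α ^ k * G ^ 2)) • g k i)‖) ∧
    (∀ k, 1 ≤ k → w k = (t : ℝ)⁻¹ • ∑ i ∈ Finset.Icc 1 t, u k i)

private lemma aux_small_step (a b c : ℝ) (hc : 0 ≤ c)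
    (h : ∀ s : ℝ, 0 < s → s ≤ 1 → b ≤ a + s * c) : b ≤ a := by
  refine le_of_forall_pos_le_add fun δ hδ => ?_
  have hs : (0:ℝ) < min 1 (δ / (c + 1)) := lt_min one_pos (by positivity)
  have h1 := h _ hs (min_le_left _ _)
  have hle : min 1 (δ / (c + 1)) * c ≤ δ := by
    calc min 1 (δ / (c+1)) * c ≤ (δ / (c + 1)) * c :=
          mul_le_mul_of_nonneg_right (min_le_right _ _) hc
      _ ≤ δ := by rw [div_mul_eq_mul_div, div_le_iff₀ (by linarith)]; nlinarith
  linarith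

private lemma convexOn_half_normsq {d : ℕ} (x : EuclideanSpace ℝ (Fin d)) :
    ConvexOn ℝ Set.univ (fun u : EuclideanSpace ℝ (Fin d) => ‖x - u‖^2 / 2) := by
  refine ⟨convex_univ, ?_⟩
  intro a _ b _ p q hp hq hpq
  simp only
  have h1 : ‖x - (p • a + q • b)‖ ≤ p * ‖x - a‖ + q * ‖x - b‖ := by
    have hxe : x - (p • a + q • b) = p • (x - a) + q • (x - b) := by
      calc x - (p • a + q • b) = (p+q) • x - (p • a + q • b) := by rw [hpq, one_smul]
        _ = p • (x - a) + q • (x - b) := by rw [add_smul, smul_sub, smul_sub]; abel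
    rw [hxe]
    calc ‖p • (x-a) + q • (x-b)‖ ≤ ‖p • (x-a)‖ + ‖q • (x-b)‖ := norm_add_le _ _
      _ = p * ‖x-a‖ + q * ‖x-b‖ := by
          rw [norm_smul, norm_smul, Real.norm_of_nonneg hp, Real.norm_of_nonneg hq]
  have h2 : ‖x - (p • a + q • b)‖^2 ≤ (p*‖x-a‖+q*‖x-b‖)^2 := by
    have := norm_nonneg (x - (p • a + q • b)); nlinarith
  simp only [smul_eq_mul]
  nlinarith [norm_nonneg (x-a), norm_nonneg (x-b), sq_nonneg (‖x-a‖-‖x-b‖),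
    mul_nonneg hp hq]

private abbrev Euc (d : ℕ) : Type := EuclideanSpace ℝ (Fin d)

private lemma exists_subgrad_normal {d : ℕ} {F : EuclideanSpace ℝ (Fin d) → ℝ}
    (hF : ConvexOn ℝ Set.univ F) (hFc : Continuous F)
    {Ω : Set (EuclideanSpace ℝ (Fin d))} (hΩ : Convex ℝ Ω)
    {x : EuclideanSpace ℝ (Fin d)} (hx : x ∈ Ω)
    (hmin : ∀ u ∈ Ω, F x ≤ F u) :
    ∃ ξ, (∀ u, F x + ⟪ξ, u - x⟫ ≤ F u) ∧ (∀ v ∈ Ω, 0 ≤ ⟪ξ, v - x⟫) := by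
  classical
  set A : Set ((Euc d) × ℝ) := {p | F p.1 < p.2} with hA
  have hAopen : IsOpen A := isOpen_lt (hFc.comp continuous_fst) continuous_snd
  have hAcvx : Convex ℝ A := by
    intro p hp q hq a b ha hb hab
    simp only [hA, Set.mem_setOf_eq] at hp hq ⊢
    have hcomb := hF.2 (Set.mem_univ p.1) (Set.mem_univ q.1) ha hb hab
    have h1 : a * F p.1 ≤ a * p.2 := mul_le_mul_of_nonneg_left hp.le ha
    have h2 : b * F q.1 ≤ b * q.2 := mul_le_mul_of_nonneg_left hq.le hb
    have hstrict : a * F p.1 + b * F q.1 < a * p.2 + b * q.2 := by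
      rcases lt_or_eq_of_le ha with ha' | ha'
      · have := mul_lt_mul_of_pos_left hp ha'; linarith
      · have hb1 : b = 1 := by linarith
        have := mul_lt_mul_of_pos_left hq (by linarith : (0:ℝ) < b); linarith
    have : F (a • p.1 + b • q.1) ≤ a * F p.1 + b * F q.1 := by
      simpa [smul_eq_mul] using hcomb
    calc F ((a • p + b • q).1) = F (a • p.1 + b • q.1) := rfl
      _ ≤ a * F p.1 + b * F q.1 := this
      _ < a * p.2 + b * q.2 := hstrict
      _ = (a • p + b • q).2 := rfl
  have hBcvx : Convex ℝ (Ω ×ˢ ({F x} : Set ℝ)) := hΩ.prod (convex_singleton _)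
  have hdisj : Disjoint A (Ω ×ˢ ({F x} : Set ℝ)) := by
    rw [Set.disjoint_left]
    rintro p hpA ⟨hp1, hp2⟩
    simp only [Set.mem_singleton_iff] at hp2
    have := hmin p.1 hp1
    simp only [hA, Set.mem_setOf_eq, hp2] at hpA
    linarith
  obtain ⟨φ, c, hc1, hc2⟩ := geometric_hahn_banach_open hAcvx hAopen hBcvx hdisj
  set β := φ ((0 : (Euc d)), (1:ℝ)) with hβdef
  have hφ : ∀ (u : (Euc d)) (s : ℝ), φ (u, s) = φ (u, 0) + s * β := by
    intro u s
    have hsplit : ((u, s) : (Euc d) × ℝ) = (u, 0) + s • ((0 : (Euc d)), (1:ℝ)) := by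
      simp [Prod.ext_iff]
    rw [hsplit, map_add, map_smul, smul_eq_mul]
  have hβ0 : β ≤ 0 := by
    by_contra hcon; push_neg at hcon
    set s₀ := max (F 0 + 1) ((c - φ ((0:(Euc d)), (0:ℝ)) + 1)/β) with hs₀
    have h1 : F 0 < s₀ := lt_of_lt_of_le (by linarith) (le_max_left _ _)
    have hmem : ((0:(Euc d)), s₀) ∈ A := h1
    have hlt := hc1 _ hmem
    rw [hφ] at hlt
    have h2 : (c - φ ((0:(Euc d)), (0:ℝ)) + 1)/β ≤ s₀ := le_max_right _ _
    rw [div_le_iff₀ hcon] at h2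
    linarith
  have hβneg : β < 0 := by
    rcases lt_or_eq_of_le hβ0 with h | h
    · exact h
    · exfalso
      have hlin : ∀ u : (Euc d), φ (u, 0) < c := by
        intro u
        have hmem : ((u : (Euc d)), F u + 1) ∈ A := by
          simp only [hA, Set.mem_setOf_eq]; linarith
        have h2 := hc1 _ hmem
        rw [hφ] at h2; rw [h] at h2; linarith
      have hle : ∀ v : (Euc d), φ (v, 0) ≤ 0 := by
        intro v
        by_contra hv; push_neg at hv
        have hkey := hlin ((c/φ (v,0) + 1) • v)
        have hsm : ((c/φ (v,(0:ℝ)) + 1) • v, (0:ℝ)) = (c/φ (v,0) + 1) • ((v : (Euc d)), (0:ℝ)) := by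
          simp [Prod.smul_mk]
        rw [hsm, map_smul, smul_eq_mul, add_mul, div_mul_cancel₀ _ (ne_of_gt hv)] at hkey
        linarith
      have hzero : ∀ u : (Euc d), φ (u, 0) = 0 := by
        intro u
        have h1 := hle u
        have h2 := hle (-u)
        have : φ ((-u : (Euc d)), (0:ℝ)) = -φ (u, 0) := by
          have : ((-u : (Euc d)), (0:ℝ)) = -((u:(Euc d)), (0:ℝ)) := by simp [Prod.ext_iff]
          rw [this, map_neg]
        linarith
      have hcle := hc2 (x, F x) ⟨hx, rfl⟩
      have hmem : ((x : (Euc d)), F x + 1) ∈ A := by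
        simp only [hA, Set.mem_setOf_eq]; linarith
      have hclt := hc1 _ hmem
      rw [hφ, hzero] at hclt
      rw [hφ, hzero] at hcle
      rw [h] at hclt hcle
      simp at hclt hcle
      linarith
  have key1 : ∀ u : (Euc d), φ (u,0) + F u * β ≤ c := by
    intro u
    by_contra hcon; push_neg at hcon
    set D := φ ((u:(Euc d)),(0:ℝ)) + F u * β - c with hD
    have hDpos : 0 < D := by simp only [hD]; linarith
    set δ := D / (-2*β) with hδdef
    have hδ : 0 < δ := div_pos hDpos (by linarith)
    have hmem : ((u:(Euc d)), F u + δ) ∈ A := by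
      simp only [hA, Set.mem_setOf_eq]; linarith
    have := hc1 _ hmem
    rw [hφ] at this
    have hβne : β ≠ 0 := by linarith
    have hδβ : δ * β = -(D/2) := by
      rw [hδdef]; field_simp
    nlinarith
  have key2 : ∀ v ∈ Ω, c ≤ φ (v,0) + F x * β := by
    intro v hv
    have := hc2 (v, F x) ⟨hv, rfl⟩
    rwa [hφ] at this
  set L : (Euc d) →L[ℝ] ℝ := (-β)⁻¹ • (φ.comp (ContinuousLinearMap.inl ℝ (Euc d) ℝ)) with hL
  refine ⟨(InnerProductSpace.toDual ℝ (Euc d)).symm L, ?_, ?_⟩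
  all_goals
    have hξ : ∀ u : (Euc d), ⟪(InnerProductSpace.toDual ℝ (Euc d)).symm L, u⟫ = (-β)⁻¹ * φ (u, 0) := by
      intro u
      rw [InnerProductSpace.toDual_symm_apply]
      simp [hL]
  · intro u
    have h1 := key1 u
    have h2 := key2 x hx
    have hinner : ⟪(InnerProductSpace.toDual ℝ (Euc d)).symm L, u - x⟫
        = (-β)⁻¹ * (φ (u,0) - φ (x,0)) := by
      rw [inner_sub_right, hξ, hξ]; ring
    have hβpos : 0 < -β := by linarith
    have hstep : φ (u,0) - φ (x,0) ≤ (F u - F x) * (-β) := by nlinarith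
    have hβne : β ≠ 0 := by linarith
    have : (-β)⁻¹ * (φ (u,0) - φ (x,0)) ≤ F u - F x := by
      calc (-β)⁻¹ * (φ (u,0) - φ (x,0)) ≤ (-β)⁻¹ * ((F u - F x) * -β) :=
            mul_le_mul_of_nonneg_left hstep (inv_nonneg.2 hβpos.le)
        _ = F u - F x := by field_simp
    rw [hinner]; linarith
  · intro v hv
    have h1 := key2 v hv
    have h2 := key1 x
    have hinner : ⟪(InnerProductSpace.toDual ℝ (Euc d)).symm L, v - x⟫
        = (-β)⁻¹ * (φ (v,0) - φ (x,0)) := by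
      rw [inner_sub_right, hξ, hξ]; ring
    rw [hinner]
    have hβpos : 0 < -β := by linarith
    have : 0 ≤ φ (v,0) - φ (x,0) := by linarith
    positivity

private lemma subgrad_of_quad {d : ℕ} {f : EuclideanSpace ℝ (Fin d) → ℝ}
    (hf : ConvexOn ℝ Set.univ f) {lam : ℝ} (hlam : 0 < lam)
    (w₀ x ξ : EuclideanSpace ℝ (Fin d))
    (h : ∀ u, (lam * f x + ‖w₀ - x‖^2/2) + ⟪ξ, u - x⟫ ≤ lam * f u + ‖w₀ - u‖^2/2) :
    IsSubgradAt f x (lam⁻¹ • (ξ - (x - w₀))) := by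
  intro u
  have key : ⟪ξ - (x - w₀), u - x⟫ ≤ lam * (f u - f x) := by
    apply aux_small_step (lam * (f u - f x)) _ (‖u - x‖^2/2) (by positivity)
    intro s hs hs1
    have hcomb : f (x + s • (u - x)) ≤ (1 - s) * f x + s * f u := by
      have h2 := hf.2 (Set.mem_univ x) (Set.mem_univ u)
        (by linarith : (0:ℝ) ≤ 1 - s) hs.le (by ring)
      have heq : x + s • (u - x) = (1-s) • x + s • u := by
        rw [smul_sub, sub_smul, one_smul]; abel
      rw [heq]; simpa [smul_eq_mul] using h2
    have hq : ‖w₀ - (x + s • (u - x))‖^2/2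
        = ‖w₀ - x‖^2/2 - s * ⟪w₀ - x, u - x⟫ + s^2 * (‖u - x‖^2/2) := by
      have heq : w₀ - (x + s • (u - x)) = (w₀ - x) - s • (u - x) := by abel
      rw [heq, norm_sub_sq_real, real_inner_smul_right, norm_smul]
      rw [Real.norm_of_nonneg hs.le, mul_pow]
      ring
    have hsub := h (x + s • (u - x))
    have hss : (x + s • (u - x)) - x = s • (u - x) := by abel
    rw [hss, real_inner_smul_right, hq] at hsub
    have hmul := mul_le_mul_of_nonneg_left hcomb hlam.le
    have expand : ⟪ξ - (x - w₀), u - x⟫ = ⟪ξ, u - x⟫ + ⟪w₀ - x, u - x⟫ := by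
      rw [inner_sub_left, show x - w₀ = -(w₀ - x) by abel, inner_neg_left]; ring
    have hfinal : s * ⟪ξ - (x - w₀), u - x⟫
        ≤ s * (lam * (f u - f x) + s * (‖u - x‖^2/2)) := by
      rw [expand]; nlinarith
    exact (mul_le_mul_iff_right₀ hs).1 hfinal
  have hsm : ⟪lam⁻¹ • (ξ - (x - w₀)), u - x⟫ = lam⁻¹ * ⟪ξ - (x - w₀), u - x⟫ :=
    real_inner_smul_left _ _ _
  rw [hsm]
  have h2 := mul_le_mul_of_nonneg_left key (inv_nonneg.2 hlam.le)
  rw [← mul_assoc, inv_mul_cancel₀ (ne_of_gt hlam), one_mul] at h2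
  linarith

set_option maxHeartbeats 1000000 in
private lemma proj_exists {d : ℕ} {S : Set (EuclideanSpace ℝ (Fin d))} (hne : S.Nonempty)
    (hcl : IsClosed S) (hcvx : Convex ℝ S) (x : EuclideanSpace ℝ (Fin d)) :
    ∃ y ∈ S, (∀ z ∈ S, ‖x - y‖ ≤ ‖x - z‖) ∧ ∀ z ∈ S, ⟪x - y, z - y⟫ ≤ 0 := by
  have hcomp : IsComplete S := hcl.isComplete
  obtain ⟨y, hyS, hy⟩ :=
    exists_norm_eq_iInf_of_complete_convex hne hcomp hcvx x
  have h1 : ∀ z ∈ S, ‖x - y‖ ≤ ‖x - z‖ := by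
    intro z hz
    rw [hy]
    have hbdd : BddBelow (Set.range fun w : S => ‖x - (w : EuclideanSpace ℝ (Fin d))‖) :=
      ⟨0, by rintro _ ⟨w, rfl⟩; exact norm_nonneg _⟩
    exact ciInf_le hbdd ⟨z, hz⟩
  exact ⟨y, hyS, h1, (norm_eq_iInf_iff_real_inner_le_zero hcvx hyS).1 hy⟩

private lemma exists_multiplier {d : ℕ} {f : EuclideanSpace ℝ (Fin d) → ℝ}
    {Ω : Set (EuclideanSpace ℝ (Fin d))} (hΩcvx : Convex ℝ Ω)
    (hf : ConvexOn ℝ Set.univ f) {c : ℝ} {x y u₀ : EuclideanSpace ℝ (Fin d)}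
    (hx : x ∈ Ω) (hy : y ∈ Ω) (hfy : f y ≤ c)
    (hu₀ : u₀ ∈ Ω) (hu₀c : f u₀ < c) (hfx : c < f x)
    (hmin : ∀ z ∈ Ω, f z ≤ c → ‖x - y‖ ≤ ‖x - z‖) :
    ∃ lam : ℝ, 0 < lam ∧
      ∀ u ∈ Ω, 0 ≤ lam * (f u - c) + (‖x - u‖^2/2 - ‖x - y‖^2/2) := by
  classical
  set q : EuclideanSpace ℝ (Fin d) → ℝ := fun u => ‖x - u‖^2/2 with hqdef
  set B : Set (ℝ × ℝ) := {p | ∃ u ∈ Ω, f u - c ≤ p.1 ∧ q u - q y ≤ p.2} with hBdef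
  set A : Set (ℝ × ℝ) := (Set.Iio (0:ℝ)) ×ˢ (Set.Iio (0:ℝ)) with hAdef
  have hAcvx : Convex ℝ A := (convex_Iio _).prod (convex_Iio _)
  have hAopen : IsOpen A := isOpen_Iio.prod isOpen_Iio
  have hqcvx := convexOn_half_normsq x
  have hBcvx : Convex ℝ B := by
    rintro p ⟨u, hu, hu1, hu2⟩ p' ⟨u', hu', hu1', hu2'⟩ a b ha hb hab
    refine ⟨a • u + b • u', hΩcvx hu hu' ha hb hab, ?_, ?_⟩
    · have h2 := hf.2 (Set.mem_univ u) (Set.mem_univ u') ha hb hab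
      simp only [smul_eq_mul] at h2
      have hc' : c = a * c + b * c := by rw [← add_mul, hab, one_mul]
      have e1 := mul_le_mul_of_nonneg_left hu1 ha
      have e2 := mul_le_mul_of_nonneg_left hu1' hb
      simp only [Prod.fst_add, Prod.smul_fst, smul_eq_mul]
      nlinarith
    · have h2 := hqcvx.2 (Set.mem_univ u) (Set.mem_univ u') ha hb hab
      simp only [smul_eq_mul] at h2
      have hc' : q y = a * q y + b * q y := by rw [← add_mul, hab, one_mul]
      have e1 := mul_le_mul_of_nonneg_left hu2 ha
      have e2 := mul_le_mul_of_nonneg_left hu2' hb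
      simp only [Prod.snd_add, Prod.smul_snd, smul_eq_mul]
      have : q (a • u + b • u') ≤ a * q u + b * q u' := h2
      nlinarith
  have hdisj : Disjoint A B := by
    rw [Set.disjoint_left]
    rintro p hpA ⟨u, hu, h1, h2⟩
    obtain ⟨hp1, hp2⟩ := hpA
    simp only [Set.mem_Iio] at hp1 hp2
    have hfu : f u ≤ c := by linarith
    have hge := hmin u hu hfu
    have : q y ≤ q u := by
      have := pow_le_pow_left₀ (norm_nonneg _) hge 2
      simp only [hqdef]; linarith
    linarith
  obtain ⟨φ, cc, hcc1, hcc2⟩ := geometric_hahn_banach_open hAcvx hAopen hBcvx hdisj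
  set l1 := φ ((1:ℝ), (0:ℝ)) with hl1def
  set l2 := φ ((0:ℝ), (1:ℝ)) with hl2def
  have hφ : ∀ p : ℝ × ℝ, φ p = p.1 * l1 + p.2 * l2 := by
    intro p
    have hps : p = p.1 • ((1:ℝ),(0:ℝ)) + p.2 • ((0:ℝ),(1:ℝ)) := by
      simp [Prod.ext_iff]
    conv_lhs => rw [hps]
    rw [map_add, map_smul, map_smul, smul_eq_mul, smul_eq_mul]
  have hl1 : 0 ≤ l1 := by
    by_contra h; push_neg at h
    set M := max 1 ((cc + l2 + 1)/(-l1)) with hM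
    have hM1 : (1:ℝ) ≤ M := le_max_left _ _
    have hmem : ((-M : ℝ), (-1:ℝ)) ∈ A := by
      constructor <;> simp only [Set.mem_Iio] <;> linarith
    have hlt := hcc1 _ hmem
    rw [hφ] at hlt; simp only at hlt
    have h2 : (cc + l2 + 1)/(-l1) ≤ M := le_max_right _ _
    rw [div_le_iff₀ (by linarith)] at h2
    nlinarith
  have hl2 : 0 ≤ l2 := by
    by_contra h; push_neg at h
    set M := max 1 ((cc + l1 + 1)/(-l2)) with hM
    have hM1 : (1:ℝ) ≤ M := le_max_left _ _
    have hmem : ((-1 : ℝ), (-M:ℝ)) ∈ A := by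
      constructor <;> simp only [Set.mem_Iio] <;> linarith
    have hlt := hcc1 _ hmem
    rw [hφ] at hlt; simp only at hlt
    have h2 : (cc + l1 + 1)/(-l2) ≤ M := le_max_right _ _
    rw [div_le_iff₀ (by linarith)] at h2
    nlinarith
  have hcc0 : 0 ≤ cc := by
    by_contra h; push_neg at h
    set δ := (-cc)/(l1 + l2 + 1) with hδ
    have hδpos : 0 < δ := div_pos (by linarith) (by linarith)
    have hmem : ((-δ : ℝ), (-δ:ℝ)) ∈ A := by
      constructor <;> simp only [Set.mem_Iio] <;> linarith
    have hlt := hcc1 _ hmem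
    rw [hφ] at hlt; simp only at hlt
    have hkey : δ * (l1 + l2) ≤ -cc := by
      rw [hδ, div_mul_eq_mul_div, div_le_iff₀ (by linarith)]
      nlinarith
    nlinarith
  have hkey : ∀ u ∈ Ω, 0 ≤ (f u - c) * l1 + (q u - q y) * l2 := by
    intro u hu
    have := hcc2 (f u - c, q u - q y) ⟨u, hu, le_refl _, le_refl _⟩
    rw [hφ] at this; simp only at this
    linarith
  have hl2pos : 0 < l2 := by
    rcases lt_or_eq_of_le hl2 with h | h
    · exact h
    · exfalso
      have h1 := hkey u₀ hu₀
      rw [← h] at h1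
      have hl10 : l1 = 0 := by nlinarith
      have hbmem : ((f y - c : ℝ), (0:ℝ)) ∈ B := ⟨y, hy, le_refl _, by simp⟩
      have hc2' := hcc2 _ hbmem
      rw [hφ] at hc2'; simp only at hc2'
      have hamem : ((-1:ℝ), (-1:ℝ)) ∈ A := by
        constructor <;> simp only [Set.mem_Iio] <;> linarith
      have hc1' := hcc1 _ hamem
      rw [hφ] at hc1'; simp only at hc1'
      rw [hl10, ← h] at hc1' hc2'
      simp at hc1' hc2'
      linarith
  have hl1pos : 0 < l1 := by
    rcases lt_or_eq_of_le hl1 with h | h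
    · exact h
    · exfalso
      have h1 := hkey x hx
      rw [← h] at h1
      have hqx : q x = 0 := by simp [hqdef]
      have hqy : 0 ≤ q y := by positivity
      have hqy0 : q y = 0 := by nlinarith
      have : ‖x - y‖^2 = 0 := by
        simp only [hqdef] at hqy0; linarith
      have hxy : x = y := by
        have := pow_eq_zero_iff (n := 2) (by norm_num) |>.1 this
        rwa [norm_sub_eq_zero_iff] at this
      rw [hxy] at hfx; linarith
  refine ⟨l1 / l2, div_pos hl1pos hl2pos, ?_⟩
  intro u hu
  have h1 := hkey u hu
  have h2 : (0:ℝ) ≤ (f u - c) * (l1/l2) + (q u - q y) := by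
    have h3 := div_nonneg (by linarith : (0:ℝ) ≤ (f u - c) * l1 + (q u - q y) * l2) hl2pos.le
    rw [add_div, mul_div_assoc, mul_div_assoc, div_self (ne_of_gt hl2pos), mul_one] at h3
    exact h3
  simp only [hqdef] at h2
  linarith

private lemma err_bound {d : ℕ} {f : EuclideanSpace ℝ (Fin d) → ℝ}
    {Ω : Set (EuclideanSpace ℝ (Fin d))}
    (hΩcl : IsClosed Ω) (hΩcvx : Convex ℝ Ω) (hf : ConvexOn ℝ Set.univ f)
    {c ρ : ℝ} (hρ : 0 < ρ)
    (hres : ∀ z ∈ Ω, f z = c →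
      ∀ g v, IsSubgradAt f z g → InNormalCone Ω z v → ρ ≤ ‖g + v‖)
    {u₀ : EuclideanSpace ℝ (Fin d)} (hu₀ : u₀ ∈ Ω) (hu₀c : f u₀ < c)
    {x : EuclideanSpace ℝ (Fin d)} (hx : x ∈ Ω) :
    ∃ y ∈ Ω, f y ≤ c ∧ ρ * ‖x - y‖ ≤ max 0 (f x - c) := by
  have fcont : Continuous f := by
    have h0 := hf.continuousOn isOpen_univ
    exact continuousOn_univ.mp h0
  by_cases hfx : f x ≤ c
  · exact ⟨x, hx, hfx, by simp⟩
  push_neg at hfx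
  set S : Set (EuclideanSpace ℝ (Fin d)) := Ω ∩ f ⁻¹' (Set.Iic c) with hSdef
  have hSne : S.Nonempty := ⟨u₀, hu₀, by simp [Set.mem_preimage]; linarith⟩
  have hScl : IsClosed S := hΩcl.inter (isClosed_Iic.preimage fcont)
  have hScvx : Convex ℝ S := by
    intro a ha b hb p q' hp hq' hpq'
    obtain ⟨haΩ, hac⟩ := ha
    obtain ⟨hbΩ, hbc⟩ := hb
    simp only [Set.mem_preimage, Set.mem_Iic] at hac hbc
    refine ⟨hΩcvx haΩ hbΩ hp hq' hpq', ?_⟩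
    simp only [Set.mem_preimage, Set.mem_Iic]
    have h2 := hf.2 (Set.mem_univ a) (Set.mem_univ b) hp hq' hpq'
    simp only [smul_eq_mul] at h2
    have e1 := mul_le_mul_of_nonneg_left hac hp
    have e2 := mul_le_mul_of_nonneg_left hbc hq'
    have h3 : p * c + q' * c = c := by rw [← add_mul, hpq', one_mul]
    linarith
  obtain ⟨y, hyS, hymin, hyobt⟩ := proj_exists hSne hScl hScvx x
  obtain ⟨hyΩ, hyc⟩ := hyS
  simp only [Set.mem_preimage, Set.mem_Iic] at hyc
  have hmin' : ∀ z ∈ Ω, f z ≤ c → ‖x - y‖ ≤ ‖x - z‖ := fun z hz hfz =>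
    hymin z ⟨hz, by simp [Set.mem_preimage]; linarith⟩
  have hxy : x ≠ y := fun h => by rw [← h] at hyc; linarith
  have hnxy : 0 < ‖x - y‖ := by
    rw [norm_pos_iff, sub_ne_zero]; exact hxy
  -- f y = c
  have hfy_eq : f y = c := by
    by_contra hne
    have hfy_lt : f y < c := lt_of_le_of_ne hyc hne
    set s : ℝ := (c - f y)/(f x - f y) with hs
    have hs0 : 0 < s := div_pos (by linarith) (by linarith)
    have hs1 : s < 1 := by
      rw [hs, div_lt_one (by linarith)]; linarith
    set z : EuclideanSpace ℝ (Fin d) := y + s • (x - y) with hz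
    have hzΩ : z ∈ Ω := by
      have heq : z = (1-s) • y + s • x := by
        rw [hz, smul_sub, sub_smul, one_smul]; abel
      rw [heq]
      exact hΩcvx hyΩ hx (by linarith) hs0.le (by ring)
    have hfz : f z ≤ c := by
      have heq : z = (1-s) • y + s • x := by
        rw [hz, smul_sub, sub_smul, one_smul]; abel
      have h2 := hf.2 (Set.mem_univ y) (Set.mem_univ x) (by linarith : (0:ℝ) ≤ 1 - s)
        hs0.le (by ring)
      simp only [smul_eq_mul] at h2
      rw [heq]
      have hsx : s * (f x - f y) = c - f y := by
        rw [hs, div_mul_cancel₀]; linarith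
      calc f ((1-s) • y + s • x) ≤ (1-s) * f y + s * f x := h2
        _ = f y + s * (f x - f y) := by ring
        _ = c := by rw [hsx]; ring
    have hlt : ‖x - z‖ < ‖x - y‖ := by
      have heq : x - z = (1 - s) • (x - y) := by
        rw [hz, sub_smul, one_smul]; abel
      rw [heq, norm_smul, Real.norm_of_nonneg (by linarith : (0:ℝ) ≤ 1 - s)]
      nlinarith
    exact absurd (hmin' z hzΩ hfz) (not_le.2 hlt)
  -- multiplier
  obtain ⟨lam, hlam, hlagr⟩ :=
    exists_multiplier hΩcvx hf hx hyΩ hyc hu₀ hu₀c hfx hmin'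
  -- F := lam * f + q minimized over Ω at y
  set F : EuclideanSpace ℝ (Fin d) → ℝ := fun u => lam * f u + ‖x - u‖^2/2 with hFdef
  have hFcvx : ConvexOn ℝ Set.univ F := by
    have h1 := hf.smul hlam.le
    have h2 := convexOn_half_normsq x
    have h3 := h1.add h2
    have : F = (lam • f) + (fun u => ‖x - u‖^2/2) := by
      funext u; simp [hFdef, Pi.smul_apply, smul_eq_mul]
    rwa [this]
  have hFc : Continuous F := by
    apply Continuous.add (continuous_const.mul fcont)
    exact (((continuous_const.sub continuous_id).norm.pow 2)).div_const 2
  have hFmin : ∀ u ∈ Ω, F y ≤ F u := by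
    intro u hu
    have := hlagr u hu
    simp only [hFdef]
    rw [hfy_eq] at *
    nlinarith [hlagr u hu]
  obtain ⟨ξ, hξ1, hξ2⟩ := exists_subgrad_normal hFcvx hFc hΩcvx hyΩ hFmin
  set g : EuclideanSpace ℝ (Fin d) := lam⁻¹ • (ξ - (y - x)) with hgdef
  have hg : IsSubgradAt f y g := subgrad_of_quad hf hlam x y ξ hξ1
  set v : EuclideanSpace ℝ (Fin d) := lam⁻¹ • (-ξ) with hvdef
  have hv : InNormalCone Ω y v := by
    intro u hu
    rw [hvdef, real_inner_smul_left, inner_neg_left]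
    have := hξ2 u hu
    have hinv : 0 ≤ lam⁻¹ := inv_nonneg.2 hlam.le
    nlinarith
  have hgv : g + v = lam⁻¹ • (x - y) := by
    rw [hgdef, hvdef, ← smul_add]
    congr 1
    abel
  have hρ2 := hres y hyΩ hfy_eq g v hg hv
  rw [hgv, norm_smul, Real.norm_of_nonneg (inv_nonneg.2 hlam.le)] at hρ2
  -- subgradient inequality at x
  have hsub := hg x
  have hginner : ⟪g, x - y⟫ = lam⁻¹ * (⟪ξ, x - y⟫ + ‖x - y‖^2) := by
    rw [hgdef, real_inner_smul_left, inner_sub_left]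
    have h1 : y - x = -(x - y) := by abel
    rw [h1, inner_neg_left, real_inner_self_eq_norm_sq]
    ring
  have hξxy : 0 ≤ ⟪ξ, x - y⟫ := hξ2 x hx
  have hfxy : f x - f y ≥ lam⁻¹ * ‖x - y‖^2 := by
    rw [hginner] at hsub
    have hinv : 0 ≤ lam⁻¹ := inv_nonneg.2 hlam.le
    nlinarith
  have hfinal : ρ * ‖x - y‖ ≤ f x - c := by
    have h1 : lam⁻¹ * ‖x - y‖^2 = (lam⁻¹ * ‖x - y‖) * ‖x - y‖ := by ring
    have h2 : ρ * ‖x - y‖ ≤ (lam⁻¹ * ‖x - y‖) * ‖x - y‖ :=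
      mul_le_mul_of_nonneg_right hρ2 (norm_nonneg _)
    rw [← hfy_eq]
    linarith [hfxy, h1 ▸ hfxy]
  refine ⟨y, hyΩ, hyc, hfinal.trans (le_max_right _ _)⟩

set_option maxHeartbeats 1000000 in
private lemma stage_bound {d : ℕ} {f : EuclideanSpace ℝ (Fin d) → ℝ}
    {Ω : Set (EuclideanSpace ℝ (Fin d))} (hΩcvx : Convex ℝ Ω)
    (hf : ConvexOn ℝ Set.univ f) {G : ℝ}
    (hGbnd : ∀ z ∈ Ω, ∀ g, IsSubgradAt f z g → ‖g‖ ≤ G)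
    {η : ℝ} (hη : 0 < η) {t : ℕ} (hht : 1 ≤ t)
    {u g : ℕ → EuclideanSpace ℝ (Fin d)}
    (hu1 : u 1 ∈ Ω)
    (hstep : ∀ i, 1 ≤ i → i ≤ t → IsSubgradAt f (u i) (g i) ∧ u (i+1) ∈ Ω ∧
      ∀ z ∈ Ω, ‖u (i+1) - (u i - η • g i)‖ ≤ ‖z - (u i - η • g i)‖)
    {y : EuclideanSpace ℝ (Fin d)} (hy : y = (t:ℝ)⁻¹ • ∑ i ∈ Finset.Icc 1 t, u i) :
    y ∈ Ω ∧ ∀ z ∈ Ω, f y ≤ f z + ‖u 1 - z‖^2/(2*η*t) + η * G^2/2 := by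
  have ht0 : (0:ℝ) < t := by exact_mod_cast hht
  have htne : (t:ℝ) ≠ 0 := ne_of_gt ht0
  have huΩ : ∀ i, 1 ≤ i → i ≤ t → u i ∈ Ω := by
    intro i h1 h2
    match i, h1 with
    | 1, _ => exact hu1
    | (m+2), _ => exact (hstep (m+1) (by omega) (by omega)).2.1
  have hcard : (Finset.Icc 1 t).card = t := by rw [Nat.card_Icc]; omega
  have hwsum : ∑ _i ∈ Finset.Icc 1 t, (t:ℝ)⁻¹ = 1 := by
    rw [Finset.sum_const, hcard, nsmul_eq_mul, mul_inv_cancel₀ htne]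
  have hyΩ : y ∈ Ω := by
    rw [hy, Finset.smul_sum]
    exact hΩcvx.sum_mem (fun i _ => inv_nonneg.2 ht0.le) hwsum
      (fun i hi => huΩ i (Finset.mem_Icc.1 hi).1 (Finset.mem_Icc.1 hi).2)
  refine ⟨hyΩ, ?_⟩
  intro z hz
  letI : Nonempty Ω := ⟨⟨u 1, hu1⟩⟩
  have hkey : ∀ i, 1 ≤ i → i ≤ t →
      2*η*(f (u i) - f z) ≤ ‖u i - z‖^2 - ‖u (i+1) - z‖^2 + η^2 * G^2 := by
    intro i h1 h2
    obtain ⟨hsg, hmem, hproj⟩ := hstep i h1 h2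
    set p : EuclideanSpace ℝ (Fin d) := u i - η • g i with hpdef
    have huiΩ := huΩ i h1 h2
    have hgG : ‖g i‖ ≤ G := hGbnd _ huiΩ _ hsg
    have hobt : ⟪p - u (i+1), z - u (i+1)⟫ ≤ 0 := by
      have heq : ‖p - u (i+1)‖ = ⨅ w : Ω, ‖p - (w : EuclideanSpace ℝ (Fin d))‖ := by
        apply le_antisymm
        · apply le_ciInf
          rintro ⟨z', hz'⟩
          have := hproj z' hz'
          rw [norm_sub_rev p, norm_sub_rev p]
          exact this
        · have hbdd : BddBelow (Set.range fun w : Ω =>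
              ‖p - (w : EuclideanSpace ℝ (Fin d))‖) :=
            ⟨0, by rintro _ ⟨w, rfl⟩; exact norm_nonneg _⟩
          exact ciInf_le hbdd ⟨u (i+1), hmem⟩
      exact (norm_eq_iInf_iff_real_inner_le_zero hΩcvx hmem).1 heq z hz
    have h1' : ‖u (i+1) - z‖^2 ≤ ‖p - z‖^2 := by
      have hexp : ‖p - z‖^2
          = ‖p - u (i+1)‖^2 + 2*⟪p - u (i+1), u (i+1) - z⟫ + ‖u (i+1) - z‖^2 := by
        have hsplit : p - z = (p - u (i+1)) + (u (i+1) - z) := by abel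
        rw [hsplit, norm_add_sq_real]
      have hflip : ⟪p - u (i+1), u (i+1) - z⟫ = -⟪p - u (i+1), z - u (i+1)⟫ := by
        rw [← inner_neg_right]; congr 1; abel
      nlinarith [sq_nonneg ‖p - u (i+1)‖]
    have h2' : ‖p - z‖^2 = ‖u i - z‖^2 - 2*η*⟪g i, u i - z⟫ + η^2*‖g i‖^2 := by
      have hsplit : p - z = (u i - z) - η • (g i) := by rw [hpdef]; abel
      rw [hsplit, norm_sub_sq_real, real_inner_smul_right, norm_smul,
        Real.norm_of_nonneg hη.le, mul_pow, real_inner_comm]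
      ring
    have h3' : f (u i) - f z ≤ ⟪g i, u i - z⟫ := by
      have hsgz := hsg z
      have hflip : ⟪g i, z - u i⟫ = -⟪g i, u i - z⟫ := by
        rw [← inner_neg_right]; congr 1; abel
      rw [hflip] at hsgz
      linarith
    have h4'' : ‖g i‖^2 ≤ G^2 := by nlinarith [norm_nonneg (g i)]
    have h4' : η^2 * ‖g i‖^2 ≤ η^2 * G^2 :=
      mul_le_mul_of_nonneg_left h4'' (sq_nonneg η)
    nlinarith [mul_le_mul_of_nonneg_left h3' (by positivity : (0:ℝ) ≤ 2*η)]
  -- sum up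
  have hsum := Finset.sum_le_sum
    (fun i hi => hkey i (Finset.mem_Icc.1 hi).1 (Finset.mem_Icc.1 hi).2)
  have htel : ∀ n : ℕ, ∑ i ∈ Finset.Icc 1 n, (‖u i - z‖^2 - ‖u (i+1) - z‖^2)
      = ‖u 1 - z‖^2 - ‖u (n+1) - z‖^2 := by
    intro n
    induction n with
    | zero => simp
    | succ m ih => rw [Finset.sum_Icc_succ_top (by omega : 1 ≤ m + 1), ih]; ring
  set SF := ∑ i ∈ Finset.Icc 1 t, f (u i) with hSF
  have hlhs : ∑ i ∈ Finset.Icc 1 t, (2*η*(f (u i) - f z)) = 2*η*SF - 2*η*(t:ℝ)*(f z) := by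
    have he : ∑ i ∈ Finset.Icc 1 t, (2*η*(f (u i) - f z))
        = ∑ i ∈ Finset.Icc 1 t, (2*η*f (u i) - 2*η*f z) := by
      apply Finset.sum_congr rfl; intros; ring
    rw [he, Finset.sum_sub_distrib, ← Finset.mul_sum, Finset.sum_const, hcard,
      nsmul_eq_mul, hSF]
    ring
  have hrhs : ∑ i ∈ Finset.Icc 1 t, (‖u i - z‖^2 - ‖u (i+1) - z‖^2 + η^2*G^2)
      = (‖u 1 - z‖^2 - ‖u (t+1) - z‖^2) + (t:ℝ)*(η^2*G^2) := by
    rw [Finset.sum_add_distrib, htel t, Finset.sum_const, hcard, nsmul_eq_mul]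
  have hfz2 : 2*η*SF ≤ 2*η*(t:ℝ)*(f z) + ‖u 1 - z‖^2 + (t:ℝ)*(η^2*G^2) := by
    rw [hlhs] at hsum
    rw [hrhs] at hsum
    nlinarith [sq_nonneg ‖u (t+1) - z‖]
  have hjen : f y ≤ (t:ℝ)⁻¹ * SF := by
    have hmap := hf.map_sum_le (fun i _ => inv_nonneg.2 ht0.le) hwsum
      (fun (i : ℕ) _ => Set.mem_univ (u i))
    rw [hy, Finset.smul_sum]
    calc f (∑ i ∈ Finset.Icc 1 t, (t:ℝ)⁻¹ • u i)
        ≤ ∑ i ∈ Finset.Icc 1 t, (t:ℝ)⁻¹ • f (u i) := hmap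
      _ = (t:ℝ)⁻¹ * SF := by
          rw [hSF, Finset.mul_sum]
          apply Finset.sum_congr rfl; intros; rw [smul_eq_mul]
  have h2η : (0:ℝ) < 2*η := by linarith
  have h6 : (t:ℝ)⁻¹ * SF ≤ f z + ‖u 1 - z‖^2/(2*η*(t:ℝ)) + η*G^2/2 := by
    rw [inv_mul_le_iff₀ ht0]
    have hexp : (t:ℝ) * (f z + ‖u 1 - z‖^2/(2*η*(t:ℝ)) + η*G^2/2)
        = (t:ℝ)*f z + ‖u 1 - z‖^2/(2*η) + (t:ℝ)*(η*G^2)/2 := by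
      field_simp
    rw [hexp]
    have h7 : SF - (t:ℝ)*f z - (t:ℝ)*(η*G^2)/2 ≤ ‖u 1 - z‖^2/(2*η) := by
      rw [le_div_iff₀ h2η]; nlinarith [hfz2]
    linarith
  linarith [hjen, h6]

/-- convergence of RSG when the first-order optimality residual on the
`ε`-level set is bounded below by `ρ`: if `t ≥ α²G²/ρ²` then `f(w_k) − f_* ≤ ε₀/α^k + ε`
for all `k`, and for `K = ⌈log_α(ε₀/ε)⌉` one has `f(w_K) − f_* ≤ 2ε`. -/
theorem stmt_2 {d : ℕ} (f : EuclideanSpace ℝ (Fin d) → ℝ)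
    (Ω : Set (EuclideanSpace ℝ (Fin d)))
    (hΩne : Ω.Nonempty) (hΩcl : IsClosed Ω) (hΩcvx : Convex ℝ Ω)
    (hf : ConvexOn ℝ Set.univ f)
    (fstar : ℝ) (hmin : ∀ z ∈ Ω, fstar ≤ f z)
    (hOs_ne : {z ∈ Ω | f z = fstar}.Nonempty)
    (hOs_cvx : Convex ℝ {z ∈ Ω | f z = fstar})
    (hOs_cpt : IsCompact {z ∈ Ω | f z = fstar})
    (G : ℝ) (hG : 0 < G)
    (hGbnd : ∀ z ∈ Ω, ∀ g, IsSubgradAt f z g → ‖g‖ ≤ G)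
    (ε : ℝ) (hε : 0 < ε)
    (hLne : {z ∈ Ω | f z = fstar + ε}.Nonempty)
    (ρ : ℝ) (hρ : 0 < ρ)
    (hres : ∀ z ∈ {z ∈ Ω | f z = fstar + ε}, ∀ g v : EuclideanSpace ℝ (Fin d),
      IsSubgradAt f z g → InNormalCone Ω z v → ρ ≤ ‖g + v‖)
    (ε₀ : ℝ) (hε₀ : 0 < ε₀) (hεε₀ : ε ≤ ε₀) (α : ℝ) (hα : 1 < α)
    (t : ℕ) (ht : α ^ 2 * G ^ 2 / ρ ^ 2 ≤ (t : ℝ))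
    (w : ℕ → EuclideanSpace ℝ (Fin d)) (hw0 : w 0 ∈ Ω)
    (hinit : f (w 0) - fstar ≤ ε₀)
    (hRSG : IsRSGSeq f Ω G ε₀ α t w) :
    (∀ k : ℕ, f (w k) - fstar ≤ ε₀ / α ^ k + ε) ∧
      f (w (⌈Real.logb α (ε₀ / ε)⌉.toNat)) - fstar ≤ 2 * ε := by
  obtain ⟨U, Gg, hU1, hUstep, hUavg⟩ := hRSG
  obtain ⟨u₀, hu₀Ω, hu₀f⟩ := hOs_ne
  have hα0 : (0:ℝ) < α := by linarith
  have hres' : ∀ z ∈ Ω, f z = fstar + ε →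
      ∀ g v, IsSubgradAt f z g → InNormalCone Ω z v → ρ ≤ ‖g + v‖ :=
    fun z hz he g v hg hv => hres z ⟨hz, he⟩ g v hg hv
  have ht1 : 1 ≤ t := by
    have h1 : (0:ℝ) < α^2*G^2/ρ^2 := by positivity
    have h2 : (0:ℝ) < (t:ℝ) := lt_of_lt_of_le h1 ht
    exact_mod_cast Nat.one_le_iff_ne_zero.2 (fun h => by simp [h] at h2)
  have hu₀lt : f u₀ < fstar + ε := by rw [hu₀f]; linarith
  have main : ∀ k, w k ∈ Ω ∧ f (w k) - fstar ≤ ε₀/α^k + ε := by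
    intro k
    induction k with
    | zero => exact ⟨hw0, by rw [pow_zero, div_one]; linarith⟩
    | succ n ih =>
      obtain ⟨hwnΩ, hwnb⟩ := ih
      have hηpos : (0:ℝ) < ε₀ / (α^(n+1) * G^2) := by positivity
      have hu1 : U (n+1) 1 = w n := by
        have := hU1 (n+1) (by omega)
        simpa using this
      have hstage := stage_bound hΩcvx hf hGbnd hηpos ht1
        (by rw [hu1]; exact hwnΩ) (hUstep (n+1) (by omega))
        (hUavg (n+1) (by omega))
      obtain ⟨hwkΩ, hbnd⟩ := hstage
      obtain ⟨yy, hyyΩ, hyyc, hyybnd⟩ :=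
        err_bound hΩcl hΩcvx hf hρ hres' hu₀Ω hu₀lt hwnΩ
      set εk := ε₀/α^(n+1) with hεk
      have hεkpos : 0 < εk := by positivity
      have hmax : max 0 (f (w n) - (fstar + ε)) ≤ α * εk := by
        have hεnk : ε₀/α^n = α * εk := by
          rw [hεk, pow_succ]; field_simp
        apply max_le
        · rw [← hεnk]; positivity
        · rw [← hεnk]; linarith
      have hD : ρ * ‖w n - yy‖ ≤ α * εk := le_trans hyybnd hmax
      have hb2 := hbnd yy hyyΩ
      rw [hu1] at hb2
      set D := ‖w n - yy‖ with hDdef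
      have hD0 : 0 ≤ D := norm_nonneg _
      have hDle : D ≤ α * εk / ρ := by rw [le_div_iff₀ hρ]; linarith
      set η := ε₀ / (α^(n+1) * G^2) with hηdef
      have hηeq : η = εk / G^2 := by rw [hηdef, hεk, div_div]
      have htpos : (0:ℝ) < t := by exact_mod_cast ht1
      have hG2 : η * G^2 = εk := by
        rw [hηeq]; field_simp
      have hdd : D^2 ≤ εk/2 * (2*η*(t:ℝ)) := by
        calc D^2 ≤ (α*εk/ρ)^2 := by
              apply pow_le_pow_left₀ hD0 hDle
          _ = (α^2*G^2/ρ^2) * (εk^2/G^2) := by field_simp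
          _ ≤ (t:ℝ) * (εk^2/G^2) := mul_le_mul_of_nonneg_right ht (by positivity)
          _ = εk/2 * (2*(εk/G^2)*(t:ℝ)) := by ring
          _ = εk/2 * (2*η*(t:ℝ)) := by rw [hηeq]
      have hD2 : D^2/(2*η*(t:ℝ)) ≤ εk/2 := by
        rw [div_le_iff₀ (by positivity)]; linarith
      refine ⟨hwkΩ, ?_⟩
      have : f (w (n+1)) ≤ (fstar + ε) + εk/2 + εk/2 := by
        have h8 : η * G^2/2 = εk/2 := by rw [hG2]
        calc f (w (n+1)) ≤ f yy + D^2/(2*η*(t:ℝ)) + η*G^2/2 := hb2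
          _ ≤ (fstar + ε) + εk/2 + εk/2 := by rw [h8]; linarith
      linarith
  refine ⟨fun k => (main k).2, ?_⟩
  set K := (⌈Real.logb α (ε₀ / ε)⌉).toNat with hK
  have hx1 : (1:ℝ) ≤ ε₀/ε := (one_le_div hε).2 hεε₀
  have hlog : Real.logb α (ε₀/ε) ≤ (K:ℝ) := by
    have h2 : (⌈Real.logb α (ε₀/ε)⌉ : ℝ) ≤ ((K:ℕ) : ℝ) := by
      exact_mod_cast Int.self_le_toNat _
    linarith [Int.le_ceil (Real.logb α (ε₀/ε))]
  have hαK : ε₀/ε ≤ α^K := by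
    calc ε₀/ε = α ^ Real.logb α (ε₀/ε) :=
          (Real.rpow_logb hα0 (ne_of_gt hα) (by positivity)).symm
      _ ≤ α ^ (K:ℝ) := Real.rpow_le_rpow_of_exponent_le hα.le hlog
      _ = α ^ K := Real.rpow_natCast α K
  have hfin : ε₀/α^K ≤ ε := by
    rw [div_le_iff₀ (by positivity)]
    have := (div_le_iff₀ hε).1 hαK
    linarith
  have := (main K).2
  linarith
end
end

section
/- Let ε > 0 with L_ε ≠ ∅. Then for every w ∈ L_ε, every subgradient g of f at w, and every v ∈ N_Ω(w), one has B_ε·‖g + v‖₂ ≥ ε. -/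
open RealInnerProductSpace

noncomputable section

/-- for every `w` in the `ε`-level set, every subgradient `g` of `f` at `w`
and every normal-cone vector `v`, one has `B_ε·‖g + v‖₂ ≥ ε`, where
`B_ε = max_{w ∈ L_ε} dist₂(w, Ω_*)`. -/
theorem stmt_3 {d : ℕ} (f : EuclideanSpace ℝ (Fin d) → ℝ)
    (Ω : Set (EuclideanSpace ℝ (Fin d)))
    (hΩne : Ω.Nonempty) (hΩcl : IsClosed Ω) (hΩcvx : Convex ℝ Ω)
    (hf : ConvexOn ℝ Set.univ f)
    (fstar : ℝ) (hmin : ∀ z ∈ Ω, fstar ≤ f z)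
    (hOs_ne : {z ∈ Ω | f z = fstar}.Nonempty)
    (hOs_cvx : Convex ℝ {z ∈ Ω | f z = fstar})
    (hOs_cpt : IsCompact {z ∈ Ω | f z = fstar})
    (ε : ℝ) (hε : 0 < ε)
    (hLne : {z ∈ Ω | f z = fstar + ε}.Nonempty)
    (Bε : ℝ)
    (hB : IsGreatest ((fun z => Metric.infDist z {z ∈ Ω | f z = fstar}) ''
      {z ∈ Ω | f z = fstar + ε}) Bε) :
    ∀ w ∈ {z ∈ Ω | f z = fstar + ε}, ∀ g v : EuclideanSpace ℝ (Fin d),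
      IsSubgradAt f w g → InNormalCone Ω w v → ε ≤ Bε * ‖g + v‖ := by
  intro w hw g v hg hv
  obtain ⟨hwΩ, hwf⟩ := hw
  -- closest optimal point
  obtain ⟨z, hz, hzd⟩ := hOs_cpt.exists_infDist_eq_dist hOs_ne w
  obtain ⟨hzΩ, hzf⟩ := hz
  -- key inequality: ε ≤ ⟪g + v, w - z⟫
  have h1 : f w + ⟪g, z - w⟫ ≤ f z := hg z
  have h2 : ⟪v, z - w⟫ ≤ 0 := hv z hzΩ
  have hkey : ε ≤ ⟪g + v, w - z⟫ := by
    have : ε ≤ ⟪g, w - z⟫ := by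
      have : ⟪g, z - w⟫ ≤ -ε := by rw [hwf, hzf] at h1; linarith
      have hneg : ⟪g, w - z⟫ = -⟪g, z - w⟫ := by
        rw [← inner_neg_right]; congr 1; abel
      linarith [hneg]
    have hv' : 0 ≤ ⟪v, w - z⟫ := by
      have : ⟪v, w - z⟫ = -⟪v, z - w⟫ := by
        rw [← inner_neg_right]; congr 1; abel
      linarith [this]
    rw [inner_add_left]; linarith
  have hCS : ⟪g + v, w - z⟫ ≤ ‖g + v‖ * ‖w - z‖ := real_inner_le_norm _ _
  have hdist : ‖w - z‖ = Metric.infDist w {z ∈ Ω | f z = fstar} := by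
    rw [hzd, dist_eq_norm]
  have hle : Metric.infDist w {z ∈ Ω | f z = fstar} ≤ Bε :=
    hB.2 ⟨w, ⟨hwΩ, hwf⟩, rfl⟩
  have hnn : (0:ℝ) ≤ ‖g + v‖ := norm_nonneg _
  calc ε ≤ ‖g + v‖ * ‖w - z‖ := le_trans hkey hCS
    _ ≤ ‖g + v‖ * Bε := by
        apply mul_le_mul_of_nonneg_left _ hnn
        rw [hdist]; exact hle
    _ = Bε * ‖g + v‖ := mul_comm _ _
end
end

section
/- Let ε > 0 with L_ε ≠ ∅. Then for every w ∈ Ω, ‖w − w†_ε‖₂ ≤ (‖w†_ε − w*_ε‖₂/ε)·(f(w) − f(w†_ε)) ≤ (B_ε/ε)·(f(w) − f(w†_ε)), where w*_ε denotes the point of Ω_* closest to w†_ε in ‖·‖₂. -/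
open RealInnerProductSpace

noncomputable section

/-- Projection onto a convex set: the obtuse angle property. -/
lemma aux_proj {E : Type*} [NormedAddCommGroup E] [InnerProductSpace ℝ E]
    {K : Set E} (hK : Convex ℝ K) {w v : E} (hv : v ∈ K)
    (hmin : ∀ z ∈ K, ‖v - w‖ ≤ ‖z - w‖) {z : E} (hz : z ∈ K) :
    ⟪w - v, z - v⟫ ≤ 0 := by
  by_contra h
  push_neg at h
  have hzv : z ≠ v := by
    intro hzv
    rw [hzv, sub_self, inner_zero_right] at h
    exact lt_irrefl 0 h
  have hnz : (0:ℝ) < ‖z - v‖ ^ 2 := by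
    have h' : (0:ℝ) < ‖z - v‖ := norm_pos_iff.mpr (sub_ne_zero_of_ne hzv)
    positivity
  set c : ℝ := ⟪w - v, z - v⟫ with hc
  set s : ℝ := min 1 (c / ‖z - v‖ ^ 2) with hs
  have hs0 : 0 < s := lt_min one_pos (div_pos h hnz)
  have hs1 : s ≤ 1 := min_le_left _ _
  have hsc : s * ‖z - v‖ ^ 2 ≤ c := by
    have := min_le_right 1 (c / ‖z - v‖ ^ 2)
    calc s * ‖z - v‖ ^ 2 ≤ (c / ‖z - v‖ ^ 2) * ‖z - v‖ ^ 2 := by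
          apply mul_le_mul_of_nonneg_right this (le_of_lt hnz)
      _ = c := div_mul_cancel₀ _ (ne_of_gt hnz)
  have hmem : v + s • (z - v) ∈ K := by
    have := hK hv hz (by linarith : (0:ℝ) ≤ 1 - s) hs0.le (by ring)
    convert this using 1
    module
  have hle := hmin _ hmem
  have hexp : ‖v + s • (z - v) - w‖ ^ 2
      = ‖v - w‖ ^ 2 - 2 * s * c + s ^ 2 * ‖z - v‖ ^ 2 := by
    have h1 : v + s • (z - v) - w = (v - w) + s • (z - v) := by abel
    rw [h1, norm_add_sq_real, real_inner_smul_right, norm_smul, hc]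
    have : ⟪v - w, z - v⟫ = - ⟪w - v, z - v⟫ := by
      rw [← inner_neg_left, neg_sub]
    rw [this]
    simp [mul_pow, abs_of_pos hs0]
    ring
  have hsq : ‖v - w‖ ^ 2 ≤ ‖v + s • (z - v) - w‖ ^ 2 := by
    apply sq_le_sq' _ hle
    have := norm_nonneg (v + s • (z - v) - w)
    have := norm_nonneg (v - w)
    linarith
  rw [hexp] at hsq
  nlinarith [hs0, hsc, sq_nonneg s]

/-- for every `w ∈ Ω`,
`‖w − w†_ε‖₂ ≤ (‖w†_ε − w*_ε‖₂/ε)·(f w − f w†_ε) ≤ (B_ε/ε)·(f w − f w†_ε)`,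
where `w†_ε` is the point of `S_ε` closest to `w` and `w*_ε` is the point of `Ω_*`
closest to `w†_ε`. -/
theorem stmt_4 {d : ℕ} (f : EuclideanSpace ℝ (Fin d) → ℝ)
    (Ω : Set (EuclideanSpace ℝ (Fin d)))
    (hΩne : Ω.Nonempty) (hΩcl : IsClosed Ω) (hΩcvx : Convex ℝ Ω)
    (hf : ConvexOn ℝ Set.univ f)
    (fstar : ℝ) (hmin : ∀ z ∈ Ω, fstar ≤ f z)
    (hOs_ne : {z ∈ Ω | f z = fstar}.Nonempty)
    (hOs_cvx : Convex ℝ {z ∈ Ω | f z = fstar})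
    (hOs_cpt : IsCompact {z ∈ Ω | f z = fstar})
    (ε : ℝ) (hε : 0 < ε)
    (hLne : {z ∈ Ω | f z = fstar + ε}.Nonempty)
    (Bε : ℝ)
    (hB : IsGreatest ((fun z => Metric.infDist z {z ∈ Ω | f z = fstar}) ''
      {z ∈ Ω | f z = fstar + ε}) Bε)
    (w : EuclideanSpace ℝ (Fin d)) (hw : w ∈ Ω)
    (wd : EuclideanSpace ℝ (Fin d))
    (hwd : wd ∈ {z ∈ Ω | f z ≤ fstar + ε})
    (hwd_min : ∀ z ∈ {z ∈ Ω | f z ≤ fstar + ε}, ‖wd - w‖ ≤ ‖z - w‖)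
    (ws : EuclideanSpace ℝ (Fin d)) (hws : ws ∈ {z ∈ Ω | f z = fstar})
    (hws_min : ∀ z ∈ {z ∈ Ω | f z = fstar}, ‖wd - ws‖ ≤ ‖wd - z‖) :
    ‖w - wd‖ ≤ ‖wd - ws‖ / ε * (f w - f wd) ∧
      ‖wd - ws‖ / ε * (f w - f wd) ≤ Bε / ε * (f w - f wd) := by
  by_cases hcase : f w ≤ fstar + ε
  · have hwdw : wd = w := by
      have h0 := hwd_min w ⟨hw, hcase⟩
      rw [sub_self, norm_zero] at h0
      have := norm_nonneg (wd - w)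
      have : ‖wd - w‖ = 0 := le_antisymm h0 this
      have := norm_sub_eq_zero_iff.mp this
      exact this
    subst hwdw
    simp
  · push_neg at hcase
    -- S_ε is convex
    have hScvx : Convex ℝ {z ∈ Ω | f z ≤ fstar + ε} := by
      have h1 : {z ∈ Ω | f z ≤ fstar + ε} = Ω ∩ {z | f z ≤ fstar + ε} := by
        ext z; simp [Set.mem_sep_iff, Set.mem_inter_iff]
      rw [h1]
      apply hΩcvx.inter
      have := hf.convex_le (fstar + ε)
      simpa using this
    -- f wd = fstar + ε
    have hwdΩ := hwd.1
    have hwdle := hwd.2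
    have hfwd : f wd = fstar + ε := by
      by_contra hne
      have hlt : f wd < fstar + ε := lt_of_le_of_ne hwdle hne
      have hwdw : wd ≠ w := by
        intro h; rw [h] at hlt; linarith
      set s : ℝ := (fstar + ε - f wd) / (f w - f wd) with hsdef
      have hden : 0 < f w - f wd := by linarith
      have hs0 : 0 < s := div_pos (by linarith) hden
      have hs1 : s < 1 := (div_lt_one hden).mpr (by linarith)
      set q := (1 - s) • wd + s • w with hq
      have hqΩ : q ∈ Ω := hΩcvx hwdΩ hw (by linarith) hs0.le (by ring)
      have hqf : f q ≤ fstar + ε := by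
        have := hf.2 (Set.mem_univ wd) (Set.mem_univ w) (by linarith : (0:ℝ) ≤ 1 - s) hs0.le (by ring)
        have heq : (1 - s) * f wd + s * f w = fstar + ε := by
          field_simp [hsdef]
          have h2 : s * (f w - f wd) = fstar + ε - f wd := by
            rw [hsdef]; exact div_mul_cancel₀ _ (ne_of_gt hden)
          linarith
        simp only [smul_eq_mul] at this
        rw [hq]
        linarith [this]
      have hdist := hwd_min q ⟨hqΩ, hqf⟩
      have hqw : q - w = (1 - s) • (wd - w) := by
        rw [hq]; module
      rw [hqw, norm_smul] at hdist
      have hnorm : 0 < ‖wd - w‖ := by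
        rw [norm_pos_iff]
        exact sub_ne_zero_of_ne hwdw
      have habs : |1 - s| < 1 := by
        rw [abs_of_pos (by linarith)]; linarith
      have : ‖(1-s)‖ * ‖wd - w‖ < ‖wd - w‖ := by
        calc ‖(1-s)‖ * ‖wd - w‖ = |1 - s| * ‖wd - w‖ := by rw [Real.norm_eq_abs]
          _ < 1 * ‖wd - w‖ := by exact mul_lt_mul_of_pos_right habs hnorm
          _ = ‖wd - w‖ := one_mul _
      linarith
    -- the point p on segment [ws, w] in S_ε
    have hD : ε < f w - fstar := by linarith
    set t : ℝ := ε / (f w - fstar) with ht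
    have hD0 : 0 < f w - fstar := by linarith
    have ht0 : 0 < t := div_pos hε hD0
    have ht1 : t < 1 := (div_lt_one hD0).mpr hD
    set p := (1 - t) • ws + t • w with hp
    have hpΩ : p ∈ Ω := hΩcvx hws.1 hw (by linarith) ht0.le (by ring)
    have hpf : f p ≤ fstar + ε := by
      have := hf.2 (Set.mem_univ ws) (Set.mem_univ w) (by linarith : (0:ℝ) ≤ 1 - t) ht0.le (by ring)
      have heq : (1 - t) * f ws + t * f w = fstar + ε := by
        rw [hws.2, ht]
        field_simp
        ring
      simp only [smul_eq_mul] at this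
      rw [hp]
      linarith [this]
    have hinner : ⟪w - wd, p - wd⟫ ≤ 0 :=
      aux_proj hScvx hwd hwd_min ⟨hpΩ, hpf⟩
    -- expand
    have hpwd : p - wd = t • (w - wd) + (1 - t) • (ws - wd) := by
      rw [hp]; module
    rw [hpwd, inner_add_right, real_inner_smul_right, real_inner_smul_right,
      real_inner_self_eq_norm_sq] at hinner
    have hCS : ⟪w - wd, ws - wd⟫ ≥ -(‖w - wd‖ * ‖wd - ws‖) := by
      have h1 := real_inner_le_norm (w - wd) (wd - ws)
      have h2 : ⟪w - wd, wd - ws⟫ = - ⟪w - wd, ws - wd⟫ := by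
        rw [← inner_neg_right, neg_sub]
      linarith
    have hkey : t * ‖w - wd‖ ^ 2 ≤ (1 - t) * (‖w - wd‖ * ‖wd - ws‖) := by
      nlinarith [hinner, hCS]
    have hkey2 : t * ‖w - wd‖ ≤ (1 - t) * ‖wd - ws‖ := by
      rcases eq_or_lt_of_le (norm_nonneg (w - wd)) with h0 | h0
      · rw [← h0]
        have : (0:ℝ) ≤ (1 - t) * ‖wd - ws‖ := by
          apply mul_nonneg (by linarith) (norm_nonneg _)
        linarith
      · nlinarith
    -- conclude
    have hfdiff : f w - f wd = f w - fstar - ε := by rw [hfwd]; ring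
    have hmain : ε * ‖w - wd‖ ≤ ‖wd - ws‖ * (f w - f wd) := by
      have := mul_le_mul_of_nonneg_left hkey2 hD0.le
      have htD : (f w - fstar) * t = ε := by
        rw [ht]; field_simp
      have e1 : ε * ‖w - wd‖ = (f w - fstar) * (t * ‖w - wd‖) := by
        rw [← htD]; ring
      have e2 : (f w - fstar) * ((1 - t) * ‖wd - ws‖) = ‖wd - ws‖ * (f w - f wd) := by
        rw [hfdiff]; linear_combination (-‖wd - ws‖) * htD
      rw [e1, ← e2]
      exact this
    have hfw0 : 0 ≤ f w - f wd := by rw [hfdiff]; linarith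
    constructor
    · rw [div_mul_eq_mul_div, le_div_iff₀ hε]
      nlinarith [hmain]
    · have hBle : ‖wd - ws‖ ≤ Bε := by
        have hmem : Metric.infDist wd {z ∈ Ω | f z = fstar} ∈
            ((fun z => Metric.infDist z {z ∈ Ω | f z = fstar}) '' {z ∈ Ω | f z = fstar + ε}) :=
          ⟨wd, ⟨hwdΩ, hfwd⟩, rfl⟩
        have h1 := hB.2 hmem
        have h2 : ‖wd - ws‖ ≤ Metric.infDist wd {z ∈ Ω | f z = fstar} := by
          rw [Metric.infDist_eq_iInf]
          haveI : Nonempty {z // z ∈ {z ∈ Ω | f z = fstar}} := ⟨⟨ws, hws⟩⟩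
          apply le_ciInf
          intro y
          rw [dist_eq_norm]
          exact hws_min y y.2
        linarith
      apply mul_le_mul_of_nonneg_right _ hfw0
      apply div_le_div_of_nonneg_right hBle hε.le
end
end

section
/- Let ε > 0 with L_ε ≠ ∅ (so that B_ε > 0). Let w₀ ∈ Ω, let ε₀ > 0 satisfy f(w₀) − f_* ≤ ε₀ and ε ≤ ε₀, let α > 1, and let the integer t satisfy t ≥ α²G²B_ε²/ε². Then the RSG iterates satisfy f(w_k) − f_* ≤ ε₀/α^k + ε for every k ≥ 0; in particular, for K = ⌈log_α(ε₀/ε)⌉, f(w_K) − f_* ≤ 2ε. -/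
open RealInnerProductSpace

set_option maxHeartbeats 2000000

noncomputable section

lemma sum_Icc_one {M : Type*} [AddCommMonoid M] (t : ℕ) (f : ℕ → M) :
    ∑ i ∈ Finset.Icc 1 t, f i = ∑ j ∈ Finset.range t, f (j + 1) := by
  induction t with
  | zero => simp
  | succ n ih =>
      rw [Finset.sum_Icc_succ_top (Nat.le_add_left 1 n), ih, Finset.sum_range_succ]

lemma varineq {d : ℕ} {K : Set (EuclideanSpace ℝ (Fin d))} (hK : Convex ℝ K)
    {p x : EuclideanSpace ℝ (Fin d)} (hp : p ∈ K)
    (hmin : ∀ z ∈ K, ‖p - x‖ ≤ ‖z - x‖) :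
    ∀ z ∈ K, ⟪x - p, z - p⟫ ≤ 0 := by
  rw [← norm_eq_iInf_iff_real_inner_le_zero hK hp]
  have : Nonempty K := ⟨⟨p, hp⟩⟩
  have hbdd : BddBelow (Set.range fun w : K => ‖x - (w : EuclideanSpace ℝ (Fin d))‖) := by
    refine ⟨0, ?_⟩
    rintro _ ⟨w, rfl⟩
    exact norm_nonneg _
  apply le_antisymm
  · exact le_ciInf fun w => by
      rw [norm_sub_rev x p, norm_sub_rev x w]; exact hmin w w.2
  · exact ciInf_le hbdd ⟨p, hp⟩

lemma step_sq {d : ℕ} {Ω : Set (EuclideanSpace ℝ (Fin d))} (hΩcvx : Convex ℝ Ω)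
    {f : EuclideanSpace ℝ (Fin d) → ℝ} {u g u' z : EuclideanSpace ℝ (Fin d)} {η G : ℝ}
    (hη : 0 < η) (hsg : IsSubgradAt f u g) (hGg : ‖g‖ ≤ G)
    (hu' : u' ∈ Ω) (hz : z ∈ Ω)
    (hproj : ∀ y ∈ Ω, ‖u' - (u - η • g)‖ ≤ ‖y - (u - η • g)‖) :
    ‖u' - z‖ ^ 2 ≤ ‖u - z‖ ^ 2 - 2 * η * (f u - f z) + η ^ 2 * G ^ 2 := by
  set x := u - η • g with hx
  have hvi : ⟪x - u', z - u'⟫ ≤ 0 := varineq hΩcvx hu' hproj z hz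
  have hexp : ‖x - z‖ ^ 2 = ‖x - u'‖ ^ 2 + 2 * ⟪x - u', u' - z⟫ + ‖u' - z‖ ^ 2 := by
    have := norm_add_sq_real (x - u') (u' - z)
    have h2 : x - u' + (u' - z) = x - z := by abel
    rw [h2] at this
    linarith
  have hne : ‖u' - z‖ ^ 2 ≤ ‖x - z‖ ^ 2 := by
    have h3 : ⟪x - u', u' - z⟫ = -⟪x - u', z - u'⟫ := by
      rw [← inner_neg_right]; congr 1; abel
    nlinarith [sq_nonneg ‖x - u'‖]
  have hxz : ‖x - z‖ ^ 2 = ‖u - z‖ ^ 2 - 2 * η * ⟪g, u - z⟫ + η ^ 2 * ‖g‖ ^ 2 := by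
    have h4 : x - z = (u - z) - η • g := by rw [hx]; abel
    have h5 : ⟪u - z, η • g⟫ = η * ⟪g, u - z⟫ := by
      rw [real_inner_smul_right, real_inner_comm]
    have h6 : ‖η • g‖ ^ 2 = η ^ 2 * ‖g‖ ^ 2 := by
      rw [norm_smul, mul_pow, Real.norm_eq_abs, sq_abs]
    rw [h4, norm_sub_sq_real, h5, h6]
    ring
  have hsub : f u - f z ≤ ⟪g, u - z⟫ := by
    have := hsg z
    have h5 : ⟪g, z - u⟫ = -⟪g, u - z⟫ := by
      rw [← inner_neg_right]; congr 1; abel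
    linarith
  have hg2 : η ^ 2 * ‖g‖ ^ 2 ≤ η ^ 2 * G ^ 2 := by
    have : ‖g‖ ^ 2 ≤ G ^ 2 := by nlinarith [norm_nonneg g]
    nlinarith [sq_nonneg η]
  nlinarith [mul_le_mul_of_nonneg_left hsub (by linarith : (0:ℝ) ≤ 2 * η)]

lemma stage {d : ℕ} {Ω : Set (EuclideanSpace ℝ (Fin d))} (hΩcvx : Convex ℝ Ω)
    {f : EuclideanSpace ℝ (Fin d) → ℝ} (hf : ConvexOn ℝ Set.univ f)
    {G : ℝ} (hGbnd : ∀ z ∈ Ω, ∀ g, IsSubgradAt f z g → ‖g‖ ≤ G)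
    {t : ℕ} (ht : 1 ≤ t) {η : ℝ} (hη : 0 < η)
    {u g : ℕ → EuclideanSpace ℝ (Fin d)}
    (h1 : u 1 ∈ Ω)
    (hstep : ∀ i, 1 ≤ i → i ≤ t → IsSubgradAt f (u i) (g i) ∧ u (i + 1) ∈ Ω ∧
      ∀ z ∈ Ω, ‖u (i + 1) - (u i - η • g i)‖ ≤ ‖z - (u i - η • g i)‖)
    {z : EuclideanSpace ℝ (Fin d)} (hz : z ∈ Ω)
    {wk : EuclideanSpace ℝ (Fin d)}
    (hwk : wk = (t : ℝ)⁻¹ • ∑ i ∈ Finset.Icc 1 t, u i) :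
    wk ∈ Ω ∧ f wk ≤ f z + ‖u 1 - z‖ ^ 2 / (2 * η * t) + η * G ^ 2 / 2 := by
  have htR : (0:ℝ) < t := by exact_mod_cast ht
  -- membership of all iterates
  have huΩ : ∀ i, 1 ≤ i → i ≤ t + 1 → u i ∈ Ω := by
    intro i h1i hit
    rcases Nat.exists_eq_add_of_le h1i with ⟨j, rfl⟩
    induction j with
    | zero => exact h1
    | succ n ih =>
        have : 1 + (n + 1) = (1 + n) + 1 := by omega
        rw [this]
        exact (hstep (1 + n) (by omega) (by omega)).2.1
  -- per-iterate bound
  have hiter : ∀ i, 1 ≤ i → i ≤ t →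
      f (u i) - f z ≤ (‖u i - z‖ ^ 2 - ‖u (i + 1) - z‖ ^ 2) / (2 * η) + η * G ^ 2 / 2 := by
    intro i h1i hit
    obtain ⟨hsg, hmem, hproj⟩ := hstep i h1i hit
    have hGg := hGbnd (u i) (huΩ i h1i (by omega)) (g i) hsg
    have := step_sq hΩcvx hη hsg hGg hmem hz hproj
    have h7 : f (u i) - f z ≤ (‖u i - z‖ ^ 2 - ‖u (i + 1) - z‖ ^ 2 + η ^ 2 * G ^ 2) / (2 * η) := by
      rw [le_div_iff₀ (by positivity)]
      linarith
    refine h7.trans (le_of_eq ?_)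
    field_simp
  -- sum bound
  have hsum : ∑ i ∈ Finset.Icc 1 t, (f (u i) - f z)
      ≤ ‖u 1 - z‖ ^ 2 / (2 * η) + t * (η * G ^ 2 / 2) := by
    have hle : ∑ i ∈ Finset.Icc 1 t, (f (u i) - f z)
        ≤ ∑ i ∈ Finset.Icc 1 t,
          ((‖u i - z‖ ^ 2 - ‖u (i + 1) - z‖ ^ 2) / (2 * η) + η * G ^ 2 / 2) := by
      refine Finset.sum_le_sum fun i hi => ?_
      rw [Finset.mem_Icc] at hi
      exact hiter i hi.1 hi.2
    refine hle.trans ?_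
    rw [Finset.sum_add_distrib, Finset.sum_const, Nat.card_Icc]
    have htel : ∑ i ∈ Finset.Icc 1 t, (‖u i - z‖ ^ 2 - ‖u (i + 1) - z‖ ^ 2) / (2 * η)
        = ‖u 1 - z‖ ^ 2 / (2 * η) - ‖u (t + 1) - z‖ ^ 2 / (2 * η) := by
      rw [sum_Icc_one]
      have := Finset.sum_range_sub' (fun j => ‖u (j + 1) - z‖ ^ 2 / (2 * η)) t
      rw [← this]
      refine Finset.sum_congr rfl fun j _ => ?_
      rw [sub_div]
    rw [htel]
    have hnn : 0 ≤ ‖u (t + 1) - z‖ ^ 2 / (2 * η) := by positivity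
    have : ((t + 1 - 1 : ℕ) : ℝ) = (t : ℝ) := by
      simp
    rw [nsmul_eq_mul, this]
    linarith
  -- membership of the average
  have hwsum : wk = ∑ i ∈ Finset.Icc 1 t, (t : ℝ)⁻¹ • u i := by
    rw [hwk, Finset.smul_sum]
  have hwmem : wk ∈ Ω := by
    rw [hwsum]
    refine hΩcvx.sum_mem (fun i _ => by positivity) ?_ ?_
    · rw [Finset.sum_const, Nat.card_Icc, nsmul_eq_mul]
      field_simp
      simp
    · intro i hi
      rw [Finset.mem_Icc] at hi
      exact huΩ i hi.1 (by omega)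
  refine ⟨hwmem, ?_⟩
  -- Jensen
  have hjen : f wk ≤ ∑ i ∈ Finset.Icc 1 t, (t : ℝ)⁻¹ * f (u i) := by
    rw [hwsum]
    refine hf.map_sum_le (fun i _ => by positivity) ?_ (fun i _ => Set.mem_univ _)
    rw [Finset.sum_const, Nat.card_Icc, nsmul_eq_mul]
    field_simp
    simp
  have hsum2 : ∑ i ∈ Finset.Icc 1 t, (t : ℝ)⁻¹ * f (u i)
      = (t : ℝ)⁻¹ * ∑ i ∈ Finset.Icc 1 t, (f (u i) - f z) + f z := by
    have hss : ∑ i ∈ Finset.Icc 1 t, (f (u i) - f z)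
        = (∑ i ∈ Finset.Icc 1 t, f (u i)) - t * f z := by
      rw [Finset.sum_sub_distrib, Finset.sum_const, Nat.card_Icc, nsmul_eq_mul]
      simp
    rw [hss, mul_sub, ← Finset.mul_sum]
    field_simp
    ring
  calc f wk ≤ (t : ℝ)⁻¹ * (∑ i ∈ Finset.Icc 1 t, (f (u i) - f z)) + f z := by
        rw [← hsum2]; exact hjen
    _ ≤ (t : ℝ)⁻¹ * (‖u 1 - z‖ ^ 2 / (2 * η) + t * (η * G ^ 2 / 2)) + f z := by
        have h0 : (0:ℝ) ≤ (t : ℝ)⁻¹ := by positivity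
        nlinarith [mul_le_mul_of_nonneg_left hsum h0]
    _ = f z + ‖u 1 - z‖ ^ 2 / (2 * η * t) + η * G ^ 2 / 2 := by
        field_simp
        ring

lemma errbound {d : ℕ} {Ω : Set (EuclideanSpace ℝ (Fin d))} (hΩcvx : Convex ℝ Ω)
    {f : EuclideanSpace ℝ (Fin d) → ℝ} (hf : ConvexOn ℝ Set.univ f)
    {fstar ε Bε : ℝ} (hε : 0 < ε) (hBnn : 0 ≤ Bε)
    (hOs_ne : {z ∈ Ω | f z = fstar}.Nonempty)
    (hOs_cvx : Convex ℝ {z ∈ Ω | f z = fstar})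
    (hOs_cpt : IsCompact {z ∈ Ω | f z = fstar})
    (hBub : ∀ y ∈ {z ∈ Ω | f z = fstar + ε},
      Metric.infDist y {z ∈ Ω | f z = fstar} ≤ Bε) :
    ∀ x ∈ Ω, ∃ y ∈ Ω, f y ≤ fstar + ε ∧
      ‖x - y‖ ≤ Bε / ε * max 0 (f x - fstar - ε) := by
  intro x hx
  by_cases hcase : f x ≤ fstar + ε
  · exact ⟨x, hx, hcase, by simp; positivity⟩
  push_neg at hcase
  set Os := {z ∈ Ω | f z = fstar} with hOs
  obtain ⟨xs, hxs, hdist⟩ := hOs_cpt.exists_infDist_eq_dist hOs_ne x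
  have hxsmin : ∀ z ∈ Os, ‖xs - x‖ ≤ ‖z - x‖ := by
    intro z hz
    have h1 : Metric.infDist x Os ≤ dist x z := Metric.infDist_le_dist_of_mem hz
    rw [hdist] at h1
    rw [← dist_eq_norm, ← dist_eq_norm, dist_comm xs x, dist_comm z x]
    exact h1
  have hvi := varineq hOs_cvx hxs hxsmin
  have hfxs : f xs = fstar := hxs.2
  have hfc : Continuous f := by
    rw [← continuousOn_univ]
    exact hf.continuousOn isOpen_univ
  set φ : ℝ → ℝ := fun s => f (xs + s • (x - xs)) with hφ
  have hφc : Continuous φ := by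
    apply hfc.comp
    continuity
  have hφ0 : φ 0 = fstar := by simp [hφ, hfxs]
  have hφ1 : φ 1 = f x := by simp [hφ]
  have hIVT : ∃ s ∈ Set.Icc (0:ℝ) 1, φ s = fstar + ε := by
    have h2 := intermediate_value_Icc (by norm_num : (0:ℝ) ≤ 1) hφc.continuousOn
    have h3 : fstar + ε ∈ Set.Icc (φ 0) (φ 1) := by
      rw [hφ0, hφ1]
      exact ⟨by linarith, by linarith⟩
    obtain ⟨s, hs1, hs2⟩ := h2 h3
    exact ⟨s, hs1, hs2⟩
  obtain ⟨s, ⟨hs0, hs1⟩, hφs⟩ := hIVT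
  set y := xs + s • (x - xs) with hy
  have hspos : 0 < s := by
    rcases eq_or_lt_of_le hs0 with h | h
    · exfalso
      have : φ 0 = fstar + ε := by rw [← h] at hφs; exact hφs
      rw [hφ0] at this; linarith
    · exact h
  have hyconv : y = (1 - s) • xs + s • x := by
    rw [hy]; module
  have hymem : y ∈ Ω := by
    rw [hyconv]
    exact hΩcvx hxs.1 hx (by linarith) hs0 (by ring)
  have hfy : f y = fstar + ε := hφs
  obtain ⟨ys, hys, hydist⟩ := hOs_cpt.exists_infDist_eq_dist hOs_ne y
  have hBy : Metric.infDist y Os ≤ Bε := hBub y ⟨hymem, hfy⟩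
  have hlow : s * ‖x - xs‖ ≤ ‖y - ys‖ := by
    have hvy : ⟪x - xs, ys - xs⟫ ≤ 0 := hvi ys hys
    have hdec : y - ys = s • (x - xs) + (xs - ys) := by rw [hy]; module
    have hnsq : ‖y - ys‖ ^ 2 = s ^ 2 * ‖x - xs‖ ^ 2
        + 2 * (s * ⟪x - xs, xs - ys⟫) + ‖xs - ys‖ ^ 2 := by
      rw [hdec, norm_add_sq_real, real_inner_smul_left, norm_smul,
        Real.norm_eq_abs, mul_pow, sq_abs]
    have hip : ⟪x - xs, xs - ys⟫ = -⟪x - xs, ys - xs⟫ := by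
      rw [← inner_neg_right]; congr 1; abel
    have hsq : (s * ‖x - xs‖) ^ 2 ≤ ‖y - ys‖ ^ 2 := by
      rw [hnsq, hip]
      nlinarith [sq_nonneg ‖xs - ys‖, mul_nonneg hspos.le (neg_nonneg.mpr hvy)]
    nlinarith [norm_nonneg (y - ys), mul_nonneg hspos.le (norm_nonneg (x - xs))]
  have hkey : s * ‖x - xs‖ ≤ Bε := by
    rw [hydist, dist_eq_norm] at hBy
    linarith
  -- convexity: ε ≤ s * (f x - fstar)
  have hcvx2 : ε ≤ s * (f x - fstar) := by
    have := hf.2 (Set.mem_univ xs) (Set.mem_univ x) (by linarith : (0:ℝ) ≤ 1 - s) hs0 (by ring)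
    rw [← hyconv] at this
    simp only [smul_eq_mul] at this
    rw [hfy, hfxs] at this
    nlinarith [this]

  refine ⟨y, hymem, hfy.le, ?_⟩
  have hxy : ‖x - y‖ = (1 - s) * ‖x - xs‖ := by
    have : x - y = (1 - s) • (x - xs) := by rw [hy]; module
    rw [this, norm_smul, Real.norm_eq_abs, abs_of_nonneg (by linarith : (0:ℝ) ≤ 1 - s)]
  have hmax : max 0 (f x - fstar - ε) = f x - fstar - ε :=
    max_eq_right (by linarith)
  rw [hxy, hmax, div_mul_eq_mul_div, le_div_iff₀ hε]
  set N := ‖x - xs‖ with hN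
  have hNnn : (0:ℝ) ≤ N := norm_nonneg _
  have hA : (s * N) * ((1 - s) * ε) ≤ Bε * ((1 - s) * ε) :=
    mul_le_mul_of_nonneg_right hkey (mul_nonneg (by linarith) hε.le)
  have hB : Bε * ((1 - s) * ε) ≤ Bε * (s * ((f x - fstar) - ε)) := by
    refine mul_le_mul_of_nonneg_left ?_ hBnn
    nlinarith [hcvx2]
  nlinarith [hA, hB, hspos]

/-- convergence of RSG with `t ≥ α²G²B_ε²/ε²`:
`f(w_k) − f_* ≤ ε₀/α^k + ε` for all `k`, and for `K = ⌈log_α(ε₀/ε)⌉` one has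
`f(w_K) − f_* ≤ 2ε`, where `B_ε = max_{w ∈ L_ε} dist₂(w, Ω_*)`. -/
theorem stmt_5 {d : ℕ} (f : EuclideanSpace ℝ (Fin d) → ℝ)
    (Ω : Set (EuclideanSpace ℝ (Fin d)))
    (hΩne : Ω.Nonempty) (hΩcl : IsClosed Ω) (hΩcvx : Convex ℝ Ω)
    (hf : ConvexOn ℝ Set.univ f)
    (fstar : ℝ) (hmin : ∀ z ∈ Ω, fstar ≤ f z)
    (hOs_ne : {z ∈ Ω | f z = fstar}.Nonempty)
    (hOs_cvx : Convex ℝ {z ∈ Ω | f z = fstar})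
    (hOs_cpt : IsCompact {z ∈ Ω | f z = fstar})
    (G : ℝ) (hG : 0 < G)
    (hGbnd : ∀ z ∈ Ω, ∀ g, IsSubgradAt f z g → ‖g‖ ≤ G)
    (ε : ℝ) (hε : 0 < ε)
    (hLne : {z ∈ Ω | f z = fstar + ε}.Nonempty)
    (Bε : ℝ)
    (hB : IsGreatest ((fun z => Metric.infDist z {z ∈ Ω | f z = fstar}) ''
      {z ∈ Ω | f z = fstar + ε}) Bε)
    (ε₀ : ℝ) (hε₀ : 0 < ε₀) (hεε₀ : ε ≤ ε₀) (α : ℝ) (hα : 1 < α)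
    (t : ℕ) (ht : α ^ 2 * G ^ 2 * Bε ^ 2 / ε ^ 2 ≤ (t : ℝ))
    (w : ℕ → EuclideanSpace ℝ (Fin d)) (hw0 : w 0 ∈ Ω)
    (hinit : f (w 0) - fstar ≤ ε₀)
    (hRSG : IsRSGSeq f Ω G ε₀ α t w) :
    (∀ k : ℕ, f (w k) - fstar ≤ ε₀ / α ^ k + ε) ∧
      f (w (⌈Real.logb α (ε₀ / ε)⌉.toNat)) - fstar ≤ 2 * ε := by
  obtain ⟨u, g, hu1, hstep, havg⟩ := hRSG
  have hα0 : (0:ℝ) < α := by linarith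
  have hBnn : 0 ≤ Bε := by
    obtain ⟨z₀, hz₀, hz₀B⟩ := hB.1
    rw [← hz₀B]; exact Metric.infDist_nonneg
  have hBpos : 0 < Bε := by
    obtain ⟨z₀, hz₀, hz₀B⟩ := hB.1
    rw [← hz₀B, ← (hOs_cpt.isClosed.notMem_iff_infDist_pos hOs_ne)]
    intro hmem
    have h1 : f z₀ = fstar := hmem.2
    have h2 : f z₀ = fstar + ε := hz₀.2
    linarith
  have htposR : (0:ℝ) < t :=
    lt_of_lt_of_le (div_pos (mul_pos (mul_pos (pow_pos hα0 2) (pow_pos hG 2))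
      (pow_pos hBpos 2)) (pow_pos hε 2)) ht
  have ht1 : 1 ≤ t := Nat.cast_pos.mp htposR
  have hBub : ∀ y ∈ {z ∈ Ω | f z = fstar + ε},
      Metric.infDist y {z ∈ Ω | f z = fstar} ≤ Bε := fun y hy =>
    hB.2 (Set.mem_image_of_mem _ hy)
  have hmain : ∀ k, w k ∈ Ω ∧ f (w k) - fstar ≤ ε₀ / α ^ k + ε := by
    intro k
    induction k with
    | zero =>
        refine ⟨hw0, ?_⟩
        rw [pow_zero, div_one]
        linarith
    | succ k ih =>
        obtain ⟨hwkΩ, hwkf⟩ := ih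
        obtain ⟨y, hyΩ, hyf, hyd⟩ := errbound hΩcvx hf hε hBnn hOs_ne hOs_cvx hOs_cpt
          hBub (w k) hwkΩ
        have hεkpos : 0 < ε₀ / α ^ k := div_pos hε₀ (pow_pos hα0 k)
        have hd2 : ‖w k - y‖ ≤ Bε / ε * (ε₀ / α ^ k) := by
          refine hyd.trans ?_
          refine mul_le_mul_of_nonneg_left ?_ (by positivity)
          exact max_le hεkpos.le (by linarith)
        set η := ε₀ / (α ^ (k + 1) * G ^ 2) with hηdef
        have hηpos : 0 < η :=
          div_pos hε₀ (mul_pos (pow_pos hα0 _) (pow_pos hG 2))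
        have hu1k : u (k + 1) 1 = w k := by
          have := hu1 (k + 1) (by omega)
          simpa using this
        obtain ⟨hwΩ', hwf'⟩ := stage hΩcvx hf hGbnd ht1 hηpos
          (hu1k ▸ hwkΩ) (fun i h1 h2 => hstep (k + 1) (by omega) i h1 h2) hyΩ
          (havg (k + 1) (by omega))
        refine ⟨hwΩ', ?_⟩
        rw [hu1k] at hwf'
        set c := ε₀ / α ^ (k + 1) with hc
        have hcpos : 0 < c := div_pos hε₀ (pow_pos hα0 _)
        have hηc : η = c / G ^ 2 := by rw [hηdef, hc, div_div]
        have hαk : ε₀ / α ^ k = α * c := by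
          rw [hc, pow_succ]
          field_simp
        have hDsq : ‖w k - y‖ ^ 2 ≤ (Bε / ε * (α * c)) ^ 2 := by
          rw [← hαk]
          exact pow_le_pow_left₀ (norm_nonneg _) hd2 2
        have hnum : ‖w k - y‖ ^ 2 / (2 * η * t) ≤ c / 2 := by
          have h2ηt : (0:ℝ) < 2 * η * t :=
            mul_pos (mul_pos two_pos hηpos) htposR
          rw [div_le_div_iff₀ h2ηt two_pos]
          have ht' : α ^ 2 * G ^ 2 * Bε ^ 2 / ε ^ 2 * c ^ 2 ≤ (t : ℝ) * c ^ 2 :=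
            mul_le_mul_of_nonneg_right ht (sq_nonneg c)
          have h3 : α ^ 2 * G ^ 2 * Bε ^ 2 / ε ^ 2 * c ^ 2 * (2 / G ^ 2)
              ≤ (t : ℝ) * c ^ 2 * (2 / G ^ 2) :=
            mul_le_mul_of_nonneg_right ht' (le_of_lt (div_pos two_pos (pow_pos hG 2)))
          calc ‖w k - y‖ ^ 2 * 2 ≤ (Bε / ε * (α * c)) ^ 2 * 2 := by nlinarith [hDsq]
            _ = α ^ 2 * G ^ 2 * Bε ^ 2 / ε ^ 2 * c ^ 2 * (2 / G ^ 2) := by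
                field_simp
            _ ≤ (t : ℝ) * c ^ 2 * (2 / G ^ 2) := h3
            _ = c * (2 * η * t) := by
                rw [hηc]
                field_simp
        have hηG : η * G ^ 2 / 2 = c / 2 := by
          rw [hηc]
          field_simp
        have hfin : f (w (k + 1)) ≤ f y + c / 2 + c / 2 := by
          rw [hηG] at hwf'
          linarith [hnum]
        linarith [hyf]
  refine ⟨fun k => (hmain k).2, ?_⟩
  set K := (⌈Real.logb α (ε₀ / ε)⌉).toNat with hK
  have h1 : Real.logb α (ε₀ / ε) ≤ (K : ℝ) := by
    calc Real.logb α (ε₀ / ε) ≤ (⌈Real.logb α (ε₀ / ε)⌉ : ℝ) := Int.le_ceil _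
      _ ≤ ((K : ℤ) : ℝ) := by exact_mod_cast Int.self_le_toNat _
      _ = (K : ℝ) := by norm_cast
  have hquot : ε₀ / ε ≤ α ^ K := by
    have h2 : (0:ℝ) < ε₀ / ε := div_pos hε₀ hε
    calc ε₀ / ε = α ^ Real.logb α (ε₀ / ε) := (Real.rpow_logb hα0 hα.ne' h2).symm
      _ ≤ α ^ (K : ℝ) := Real.rpow_le_rpow_of_exponent_le hα.le h1
      _ = α ^ K := by rw [Real.rpow_natCast]
  have h4 : ε₀ / α ^ K ≤ ε := by
    rw [div_le_iff₀ (pow_pos hα0 K)]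
    rw [div_le_iff₀ hε] at hquot
    linarith
  have h5 := (hmain K).2
  linarith
end
end

section
/- Let ε > 0 and λ > 0, and suppose f is semi-strongly convex on S_ε: (λ/2)·dist₂(w, Ω_*)² ≤ f(w) − f_* for all w ∈ S_ε. Then B_ε ≤ √(2ε/λ). Moreover, if w₀ ∈ Ω, ε₀ > 0 satisfies f(w₀) − f_* ≤ ε₀ and ε ≤ ε₀, α > 1, and the integer t satisfies t ≥ 2α²G²/(λε), then for K = ⌈log_α(ε₀/ε)⌉ the RSG iterate w_K satisfies f(w_K) − f_* ≤ 2ε. -/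
open RealInnerProductSpace

noncomputable section

lemma rsg_proj_sq_le {d : ℕ} {Ω : Set (EuclideanSpace ℝ (Fin d))} (hΩcvx : Convex ℝ Ω)
    {p y : EuclideanSpace ℝ (Fin d)} (hp : p ∈ Ω)
    (hmin : ∀ z ∈ Ω, ‖p - y‖ ≤ ‖z - y‖) :
    ∀ z ∈ Ω, ‖p - z‖ ^ 2 ≤ ‖y - z‖ ^ 2 := by
  have key : ∀ w ∈ Ω, ⟪y - p, w - p⟫ ≤ 0 := by
    intro w hw
    set c : ℝ := ⟪y - p, w - p⟫ with hc
    set q : ℝ := ‖w - p‖ ^ 2 with hq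
    have hqnn : 0 ≤ q := sq_nonneg _
    have hθ : ∀ θ : ℝ, 0 < θ → θ ≤ 1 → 2 * c ≤ θ * q := by
      intro θ hθ0 hθ1
      have hzΩ : (1 - θ) • p + θ • w ∈ Ω :=
        hΩcvx hp hw (by linarith) (le_of_lt hθ0) (by ring)
      have hm := hmin _ hzΩ
      have hsq : ‖p - y‖ ^ 2 ≤ ‖(1 - θ) • p + θ • w - y‖ ^ 2 := by
        have := norm_nonneg (p - y)
        nlinarith [hm]
      have hrw : (1 - θ) • p + θ • w - y = (p - y) + θ • (w - p) := by
        module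
      rw [hrw, norm_add_sq_real, real_inner_smul_right, norm_smul,
        Real.norm_eq_abs, abs_of_pos hθ0, mul_pow] at hsq
      have hip : ⟪p - y, w - p⟫ = -c := by
        rw [hc, show p - y = -(y - p) by abel, inner_neg_left]
      rw [hip] at hsq
      nlinarith
    by_contra hcpos
    push_neg at hcpos
    rcases eq_or_lt_of_le hqnn with hq0 | hq0
    · have := hθ 1 one_pos le_rfl
      rw [← hq0] at this
      linarith
    · have hθ0 : 0 < min 1 (c / q) := lt_min one_pos (div_pos hcpos hq0)
      have h2 := hθ (min 1 (c / q)) hθ0 (min_le_left _ _)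
      have h3 : min 1 (c / q) * q ≤ (c / q) * q :=
        mul_le_mul_of_nonneg_right (min_le_right _ _) hqnn
      rw [div_mul_cancel₀ c (ne_of_gt hq0)] at h3
      linarith
  intro z hz
  have h1 := key z hz
  have h2 : ‖y - z‖ ^ 2 = ‖y - p‖ ^ 2 + 2 * ⟪y - p, p - z⟫ + ‖p - z‖ ^ 2 := by
    have := norm_add_sq_real (y - p) (p - z)
    rw [show y - p + (p - z) = y - z by abel] at this
    linarith
  have h3 : ⟪y - p, p - z⟫ = - ⟪y - p, z - p⟫ := by
    rw [show p - z = -(z - p) by abel, inner_neg_right]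
  nlinarith [sq_nonneg ‖y - p‖]

lemma rsg_stage_bound {d : ℕ} {f : EuclideanSpace ℝ (Fin d) → ℝ}
    {Ω : Set (EuclideanSpace ℝ (Fin d))} (hΩcvx : Convex ℝ Ω)
    (hf : ConvexOn ℝ Set.univ f)
    {G : ℝ} (hG : 0 < G) (hGbnd : ∀ z ∈ Ω, ∀ g, IsSubgradAt f z g → ‖g‖ ≤ G)
    {η : ℝ} (hη : 0 < η) {t : ℕ} (ht : 1 ≤ t)
    {u g : ℕ → EuclideanSpace ℝ (Fin d)}
    (hu1 : u 1 ∈ Ω)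
    (hstep : ∀ i, 1 ≤ i → i ≤ t → IsSubgradAt f (u i) (g i) ∧ u (i + 1) ∈ Ω ∧
      ∀ z ∈ Ω, ‖u (i + 1) - (u i - η • g i)‖ ≤ ‖z - (u i - η • g i)‖)
    {z : EuclideanSpace ℝ (Fin d)} (hz : z ∈ Ω) :
    ((t : ℝ)⁻¹ • ∑ i ∈ Finset.Icc 1 t, u i) ∈ Ω ∧
    f ((t : ℝ)⁻¹ • ∑ i ∈ Finset.Icc 1 t, u i)
      ≤ f z + η * G ^ 2 / 2 + ‖u 1 - z‖ ^ 2 / (2 * η * t) := by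
  have htR : (0 : ℝ) < t := by exact_mod_cast ht
  have huΩ : ∀ i, 1 ≤ i → i ≤ t + 1 → u i ∈ Ω := by
    intro i h1 h2
    match i, h1 with
    | 1, _ => exact hu1
    | (j + 2), _ => exact (hstep (j + 1) (by omega) (by omega)).2.1
  -- per-step inequality
  have hstep' : ∀ i, 1 ≤ i → i ≤ t →
      2 * η * (f (u i) - f z) ≤ ‖u i - z‖ ^ 2 - ‖u (i + 1) - z‖ ^ 2 + η ^ 2 * G ^ 2 := by
    intro i h1 h2
    obtain ⟨hsg, hmem, hproj⟩ := hstep i h1 h2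
    have hcontr := rsg_proj_sq_le hΩcvx hmem hproj z hz
    have hexp : ‖u i - η • g i - z‖ ^ 2
        = ‖u i - z‖ ^ 2 - 2 * η * ⟪g i, u i - z⟫ + η ^ 2 * ‖g i‖ ^ 2 := by
      have h := norm_sub_sq_real (u i - z) (η • g i)
      rw [show u i - z - η • g i = u i - η • g i - z by abel] at h
      rw [h, real_inner_smul_right, norm_smul, Real.norm_eq_abs, abs_of_pos hη,
        mul_pow, real_inner_comm]
      ring
    have hgG : ‖g i‖ ≤ G := hGbnd (u i) (huΩ i h1 (by omega)) (g i) hsg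
    have hsub : f (u i) - f z ≤ ⟪g i, u i - z⟫ := by
      have := hsg z
      have hri : ⟪g i, z - u i⟫ = - ⟪g i, u i - z⟫ := by
        rw [show z - u i = -(u i - z) by abel, inner_neg_right]
      rw [hri] at this
      linarith
    have hg2 : ‖g i‖ ^ 2 ≤ G ^ 2 := by nlinarith [norm_nonneg (g i)]
    nlinarith [hcontr]
  -- telescoping sum
  have htel : ∀ j, j ≤ t → 2 * η * ∑ i ∈ Finset.Icc 1 j, (f (u i) - f z)
      ≤ ‖u 1 - z‖ ^ 2 - ‖u (j + 1) - z‖ ^ 2 + j * (η ^ 2 * G ^ 2) := by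
    intro j
    induction j with
    | zero => intro _; simp
    | succ j ih =>
      intro hj
      rw [Finset.sum_Icc_succ_top (by omega : 1 ≤ j + 1), mul_add]
      have h1 := ih (by omega)
      have h2 := hstep' (j + 1) (by omega) hj
      push_cast
      linarith
  have hsum : ∑ i ∈ Finset.Icc 1 t, (f (u i) - f z)
      ≤ ‖u 1 - z‖ ^ 2 / (2 * η) + t * (η * G ^ 2 / 2) := by
    have h := htel t le_rfl
    have h2 : (0 : ℝ) ≤ ‖u (t + 1) - z‖ ^ 2 := sq_nonneg _
    have key : 2 * η * (∑ i ∈ Finset.Icc 1 t, (f (u i) - f z))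
        ≤ 2 * η * (‖u 1 - z‖ ^ 2 / (2 * η) + t * (η * G ^ 2 / 2)) := by
      have heq : 2 * η * (‖u 1 - z‖ ^ 2 / (2 * η) + t * (η * G ^ 2 / 2))
          = ‖u 1 - z‖ ^ 2 + t * (η ^ 2 * G ^ 2) := by
        field_simp
      rw [heq]
      linarith
    exact (mul_le_mul_iff_right₀ (by positivity : (0:ℝ) < 2 * η)).mp key
  -- membership of the average
  have hcard : (Finset.Icc 1 t).card = t := by
    rw [Nat.card_Icc]
    omega
  have havg : ((t : ℝ)⁻¹ • ∑ i ∈ Finset.Icc 1 t, u i)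
      = ∑ i ∈ Finset.Icc 1 t, (t : ℝ)⁻¹ • u i := Finset.smul_sum
  have hwsum : ∑ _i ∈ Finset.Icc 1 t, (t : ℝ)⁻¹ = 1 := by
    rw [Finset.sum_const, hcard, nsmul_eq_mul, mul_inv_cancel₀ (ne_of_gt htR)]
  have hmemI : ∀ i ∈ Finset.Icc 1 t, u i ∈ Ω := by
    intro i hi
    rw [Finset.mem_Icc] at hi
    exact huΩ i hi.1 (by omega)
  have hmem : ((t : ℝ)⁻¹ • ∑ i ∈ Finset.Icc 1 t, u i) ∈ Ω := by
    rw [havg]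
    exact hΩcvx.sum_mem (fun i _ => by positivity) hwsum hmemI
  refine ⟨hmem, ?_⟩
  -- Jensen
  have hjensen : f ((t : ℝ)⁻¹ • ∑ i ∈ Finset.Icc 1 t, u i)
      ≤ ∑ i ∈ Finset.Icc 1 t, (t : ℝ)⁻¹ * f (u i) := by
    rw [havg]
    exact hf.map_sum_le (fun i _ => by positivity) hwsum (fun i _ => Set.mem_univ _)
  have hsum2 : ∑ i ∈ Finset.Icc 1 t, (t : ℝ)⁻¹ * f (u i)
      = (t : ℝ)⁻¹ * ∑ i ∈ Finset.Icc 1 t, (f (u i) - f z) + f z := by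
    have hsplit : ∑ i ∈ Finset.Icc 1 t, (t : ℝ)⁻¹ * (f (u i) - f z)
        = ∑ i ∈ Finset.Icc 1 t, (t : ℝ)⁻¹ * f (u i)
          - ∑ _i ∈ Finset.Icc 1 t, (t : ℝ)⁻¹ * f z := by
      rw [← Finset.sum_sub_distrib]
      exact Finset.sum_congr rfl fun i _ => by ring
    rw [Finset.mul_sum, hsplit, Finset.sum_const, hcard, nsmul_eq_mul, ← mul_assoc,
      mul_inv_cancel₀ (ne_of_gt htR), one_mul]
    ring
  have hfin : (t : ℝ)⁻¹ * ∑ i ∈ Finset.Icc 1 t, (f (u i) - f z)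
      ≤ η * G ^ 2 / 2 + ‖u 1 - z‖ ^ 2 / (2 * η * t) := by
    have h3 : (t : ℝ)⁻¹ * (∑ i ∈ Finset.Icc 1 t, (f (u i) - f z))
        ≤ (t : ℝ)⁻¹ * (‖u 1 - z‖ ^ 2 / (2 * η) + t * (η * G ^ 2 / 2)) :=
      mul_le_mul_of_nonneg_left hsum (by positivity)
    have heq : (t : ℝ)⁻¹ * (‖u 1 - z‖ ^ 2 / (2 * η) + t * (η * G ^ 2 / 2))
        = η * G ^ 2 / 2 + ‖u 1 - z‖ ^ 2 / (2 * η * t) := by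
      field_simp
      ring
    linarith
  calc f ((t : ℝ)⁻¹ • ∑ i ∈ Finset.Icc 1 t, u i)
      ≤ ∑ i ∈ Finset.Icc 1 t, (t : ℝ)⁻¹ * f (u i) := hjensen
    _ = (t : ℝ)⁻¹ * ∑ i ∈ Finset.Icc 1 t, (f (u i) - f z) + f z := hsum2
    _ ≤ f z + η * G ^ 2 / 2 + ‖u 1 - z‖ ^ 2 / (2 * η * t) := by linarith

set_option maxHeartbeats 1000000 in
/-- if `f` is semi-strongly convex on `S_ε` with modulus `λ`, then
`B_ε ≤ √(2ε/λ)`; moreover with `t ≥ 2α²G²/(λε)` the RSG iterate at stage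
`K = ⌈log_α(ε₀/ε)⌉` satisfies `f(w_K) − f_* ≤ 2ε`. Here `B_ε` is the supremum of
`dist₂(·, Ω_*)` over `L_ε` (equal to `0` when `L_ε = ∅`). -/
theorem stmt_9 {d : ℕ} (f : EuclideanSpace ℝ (Fin d) → ℝ)
    (Ω : Set (EuclideanSpace ℝ (Fin d)))
    (hΩne : Ω.Nonempty) (hΩcl : IsClosed Ω) (hΩcvx : Convex ℝ Ω)
    (hf : ConvexOn ℝ Set.univ f)
    (fstar : ℝ) (hmin : ∀ z ∈ Ω, fstar ≤ f z)
    (hOs_ne : {z ∈ Ω | f z = fstar}.Nonempty)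
    (hOs_cvx : Convex ℝ {z ∈ Ω | f z = fstar})
    (hOs_cpt : IsCompact {z ∈ Ω | f z = fstar})
    (G : ℝ) (hG : 0 < G)
    (hGbnd : ∀ z ∈ Ω, ∀ g, IsSubgradAt f z g → ‖g‖ ≤ G)
    (ε : ℝ) (hε : 0 < ε)
    (lam : ℝ) (hlam : 0 < lam)
    (hssc : ∀ z ∈ {z ∈ Ω | f z ≤ fstar + ε},
      lam / 2 * Metric.infDist z {z ∈ Ω | f z = fstar} ^ 2 ≤ f z - fstar)
    (Bε : ℝ)
    (hB : Bε = sSup ((fun z => Metric.infDist z {z ∈ Ω | f z = fstar}) ''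
      {z ∈ Ω | f z = fstar + ε})) :
    Bε ≤ Real.sqrt (2 * ε / lam) ∧
      ∀ ε₀ : ℝ, 0 < ε₀ → ε ≤ ε₀ → ∀ α : ℝ, 1 < α → ∀ t : ℕ,
        2 * α ^ 2 * G ^ 2 / (lam * ε) ≤ (t : ℝ) →
        ∀ w : ℕ → EuclideanSpace ℝ (Fin d), w 0 ∈ Ω →
          f (w 0) - fstar ≤ ε₀ → IsRSGSeq f Ω G ε₀ α t w →
          f (w (⌈Real.logb α (ε₀ / ε)⌉.toNat)) - fstar ≤ 2 * ε := by
  have hDsq0 : (0 : ℝ) ≤ 2 * ε / lam := by positivity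
  have hDnn : 0 ≤ Real.sqrt (2 * ε / lam) := Real.sqrt_nonneg _
  have hD2 : Real.sqrt (2 * ε / lam) ^ 2 = 2 * ε / lam := Real.sq_sqrt hDsq0
  -- pointwise distance bound on the sublevel set
  have hpt : ∀ z ∈ Ω, f z ≤ fstar + ε →
      Metric.infDist z {z ∈ Ω | f z = fstar} ≤ Real.sqrt (2 * ε / lam) := by
    intro z hzΩ hzf
    rw [Real.le_sqrt Metric.infDist_nonneg hDsq0]
    have h1 := hssc z ⟨hzΩ, hzf⟩
    rw [le_div_iff₀ hlam]
    nlinarith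
  constructor
  · rw [hB]
    apply Real.sSup_le _ hDnn
    rintro x ⟨z, ⟨hzΩ, hzf⟩, rfl⟩
    exact hpt z hzΩ (le_of_eq hzf)
  intro ε₀ hε₀ hεε₀ α hα t htt w hw0 hw0f hRSG
  obtain ⟨u, g, hu1, hstep, hwavg⟩ := hRSG
  have hα0 : 0 < α := lt_trans one_pos hα
  have htpos : (0 : ℝ) < t := lt_of_lt_of_le (by positivity) htt
  have ht1 : 1 ≤ t := by
    have : 0 < t := by exact_mod_cast htpos
    omega
  have hcont : Continuous f := by
    exact continuousOn_univ.mp (hf.continuousOn isOpen_univ)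
  have hScl : IsClosed {z ∈ Ω | f z ≤ fstar + ε} := by
    have : {z ∈ Ω | f z ≤ fstar + ε} = Ω ∩ f ⁻¹' Set.Iic (fstar + ε) := rfl
    rw [this]
    exact hΩcl.inter (isClosed_Iic.preimage hcont)
  have hSne : {z ∈ Ω | f z ≤ fstar + ε}.Nonempty := by
    obtain ⟨z0, hz0Ω, hz0f⟩ := hOs_ne
    exact ⟨z0, hz0Ω, by rw [hz0f]; linarith⟩
  -- distance-to-sublevel-set lemma
  have hdist : ∀ v ∈ Ω, ∀ M : ℝ, 0 < M → f v - fstar ≤ M + ε →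
      ∃ z ∈ Ω, f z ≤ fstar + ε ∧ ‖v - z‖ ≤ M * Real.sqrt (2 * ε / lam) / ε := by
    intro v hvΩ M hM hvf
    by_cases hcase : f v ≤ fstar + ε
    · exact ⟨v, hvΩ, hcase, by rw [sub_self, norm_zero]; positivity⟩
    push_neg at hcase
    have hδε : ε < f v - fstar := by linarith
    have hδpos : 0 < f v - fstar := lt_trans hε hδε
    obtain ⟨p, hpS, hpd⟩ := hScl.exists_infDist_eq_dist hSne v
    have hple : ∀ z ∈ {z ∈ Ω | f z ≤ fstar + ε}, ‖v - p‖ ≤ ‖v - z‖ := by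
      intro z hzS
      rw [← dist_eq_norm, ← dist_eq_norm, ← hpd]
      exact Metric.infDist_le_dist_of_mem hzS
    obtain ⟨q, hqΩs, hqd⟩ := hOs_cpt.exists_infDist_eq_dist hOs_ne p
    have h5 : ‖p - q‖ ≤ Real.sqrt (2 * ε / lam) := by
      rw [← dist_eq_norm, ← hqd]
      exact hpt p hpS.1 hpS.2
    set δ := f v - fstar with hδ
    set θ := ε / δ with hθdef
    have hθ0 : 0 < θ := div_pos hε hδpos
    have hθ1 : θ ≤ 1 := by rw [div_le_one hδpos]; linarith
    have hθδ : θ * δ = ε := div_mul_cancel₀ ε (ne_of_gt hδpos)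
    have hqΩ : q ∈ Ω := hqΩs.1
    have hxΩ : θ • v + (1 - θ) • q ∈ Ω :=
      hΩcvx hvΩ hqΩ (le_of_lt hθ0) (by linarith) (by ring)
    have hfx : f (θ • v + (1 - θ) • q) ≤ fstar + ε := by
      have hj := hf.2 (Set.mem_univ v) (Set.mem_univ q) (le_of_lt hθ0)
        (by linarith : (0:ℝ) ≤ 1 - θ) (by ring)
      rw [smul_eq_mul, smul_eq_mul] at hj
      have hfq : f q = fstar := hqΩs.2
      have he : θ * f v + (1 - θ) * f q = fstar + θ * δ := by
        rw [hfq, hδ]; ring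
      rw [hθδ] at he
      linarith
    have h1 : ‖v - p‖ ≤ ‖v - (θ • v + (1 - θ) • q)‖ := hple _ ⟨hxΩ, hfx⟩
    have hvx : v - (θ • v + (1 - θ) • q) = (1 - θ) • (v - q) := by module
    have h2 : ‖v - (θ • v + (1 - θ) • q)‖ = (1 - θ) * ‖v - q‖ := by
      rw [hvx, norm_smul, Real.norm_eq_abs, abs_of_nonneg (by linarith)]
    have h3 : ‖v - q‖ ≤ ‖v - p‖ + ‖p - q‖ := by
      rw [← dist_eq_norm, ← dist_eq_norm, ← dist_eq_norm]
      exact dist_triangle v p q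
    have h4 : θ * ‖v - p‖ ≤ (1 - θ) * ‖p - q‖ := by
      have h3' := mul_le_mul_of_nonneg_left h3 (by linarith : (0:ℝ) ≤ 1 - θ)
      nlinarith [h1, h2]
    have h4' := mul_le_mul_of_nonneg_left h4 (le_of_lt hδpos)
    have e3 : δ * (θ * ‖v - p‖) = ε * ‖v - p‖ := by
      rw [← mul_assoc, mul_comm δ θ, hθδ]
    have e4 : δ * ((1 - θ) * ‖p - q‖) = (δ - ε) * ‖p - q‖ := by
      rw [← mul_assoc]
      congr 1
      rw [mul_sub, mul_one, mul_comm δ θ, hθδ]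
    have h6 : ε * ‖v - p‖ ≤ (δ - ε) * ‖p - q‖ := by
      rw [← e3, ← e4]; exact h4'
    refine ⟨p, hpS.1, hpS.2, ?_⟩
    rw [le_div_iff₀ hε]
    have h7 : (δ - ε) * ‖p - q‖ ≤ (δ - ε) * Real.sqrt (2 * ε / lam) :=
      mul_le_mul_of_nonneg_left h5 (by linarith)
    have h8 : (δ - ε) * Real.sqrt (2 * ε / lam) ≤ M * Real.sqrt (2 * ε / lam) :=
      mul_le_mul_of_nonneg_right (by linarith) hDnn
    calc ‖v - p‖ * ε = ε * ‖v - p‖ := mul_comm _ _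
      _ ≤ (δ - ε) * ‖p - q‖ := h6
      _ ≤ (δ - ε) * Real.sqrt (2 * ε / lam) := h7
      _ ≤ M * Real.sqrt (2 * ε / lam) := h8
  -- main induction on stages
  have key : ∀ k : ℕ, w k ∈ Ω ∧ f (w k) - fstar ≤ ε₀ / α ^ k + ε := by
    intro k
    induction k with
    | zero =>
      refine ⟨hw0, ?_⟩
      simp only [pow_zero, div_one]
      linarith
    | succ k ih =>
      obtain ⟨hwkΩ, hwkf⟩ := ih
      have hη : (0 : ℝ) < ε₀ / (α ^ (k + 1) * G ^ 2) := by positivity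
      have hMpos : (0 : ℝ) < ε₀ / α ^ k := by positivity
      obtain ⟨z, hzΩ, hzf, hznorm⟩ := hdist (w k) hwkΩ (ε₀ / α ^ k) hMpos hwkf
      have hu1k : u (k + 1) 1 = w k := by
        have := hu1 (k + 1) (by omega)
        simpa using this
      have hstage := rsg_stage_bound hΩcvx hf hG hGbnd hη ht1
        (show u (k + 1) 1 ∈ Ω by rw [hu1k]; exact hwkΩ)
        (fun i h1 h2 => hstep (k + 1) (by omega) i h1 h2) hzΩ
      obtain ⟨hmem, hbnd⟩ := hstage
      rw [hu1k] at hbnd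
      rw [hwavg (k + 1) (by omega)]
      refine ⟨hmem, ?_⟩
      have hA1pos : (0 : ℝ) < ε₀ / α ^ (k + 1) := by positivity
      have e1 : ε₀ / (α ^ (k + 1) * G ^ 2) * G ^ 2 / 2 = ε₀ / α ^ (k + 1) / 2 := by
        field_simp
      have ht2 : 2 * α ^ 2 * G ^ 2 ≤ lam * ε * t := by
        have htt' := (div_le_iff₀ (by positivity : (0:ℝ) < lam * ε)).mp htt
        nlinarith [htt']
      have hterm : ‖w k - z‖ ^ 2 / (2 * (ε₀ / (α ^ (k + 1) * G ^ 2)) * t)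
          ≤ (ε₀ / α ^ k * Real.sqrt (2 * ε / lam) / ε) ^ 2
            / (2 * (ε₀ / (α ^ (k + 1) * G ^ 2)) * t) := by
        gcongr
      have hchain : (ε₀ / α ^ k * Real.sqrt (2 * ε / lam) / ε) ^ 2
            / (2 * (ε₀ / (α ^ (k + 1) * G ^ 2)) * t)
          = (α ^ 2 * G ^ 2 / (lam * ε * t)) * (ε₀ / α ^ (k + 1)) := by
        have hsq : (ε₀ / α ^ k * Real.sqrt (2 * ε / lam) / ε) ^ 2
            = (ε₀ / α ^ k) ^ 2 * (Real.sqrt (2 * ε / lam)) ^ 2 / ε ^ 2 := by ring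
        rw [hsq, hD2, pow_succ]
        field_simp
        ring
      have hfrac : α ^ 2 * G ^ 2 / (lam * ε * t) ≤ 1 / 2 := by
        rw [div_le_div_iff₀ (by positivity) (by norm_num)]
        linarith
      have e2 : ‖w k - z‖ ^ 2 / (2 * (ε₀ / (α ^ (k + 1) * G ^ 2)) * t)
          ≤ ε₀ / α ^ (k + 1) / 2 := by
        have h9 : (α ^ 2 * G ^ 2 / (lam * ε * t)) * (ε₀ / α ^ (k + 1))
            ≤ (1 / 2) * (ε₀ / α ^ (k + 1)) :=
          mul_le_mul_of_nonneg_right hfrac (le_of_lt hA1pos)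
        rw [hchain] at hterm
        linarith
      linarith [hbnd, e1, e2, hzf]
  -- conclude at stage K
  set K := (⌈Real.logb α (ε₀ / ε)⌉).toNat with hK
  have hlogK : Real.logb α (ε₀ / ε) ≤ (K : ℝ) := by
    have h1 := Int.le_ceil (Real.logb α (ε₀ / ε))
    have h2 : ((⌈Real.logb α (ε₀ / ε)⌉ : ℤ) : ℝ) ≤ (K : ℝ) := by
      have := Int.self_le_toNat ⌈Real.logb α (ε₀ / ε)⌉
      exact_mod_cast this
    linarith
  have hpow : ε₀ / ε ≤ α ^ K := by
    have hq : 0 < ε₀ / ε := by positivity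
    have h := (Real.rpow_le_rpow_left_iff hα).mpr hlogK
    rw [Real.rpow_logb hα0 (ne_of_gt hα) hq, Real.rpow_natCast] at h
    exact h
  have hKb : ε₀ / α ^ K ≤ ε := by
    rw [div_le_iff₀ (by positivity)]
    rw [div_le_iff₀ hε] at hpow
    nlinarith
  obtain ⟨_, hfK⟩ := key K
  linarith
end
end
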